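/- arXiv:2502.10905 — 9 statements merged into one kernel-verified Lean document; each statement's English description precedes it below -/
import Mathlib

section
/- Let $r > k \geq 2$, let $F$ be a graph, and let $\mathcal{S}^r F$ denote the $r$-uniform suspension of $F$ (obtained by adding $r-2$ new common vertices to every edge of $F$). Then for all $n \geq r$, the Turán number satisfies $\mathrm{ex}_r(n, \mathcal{S}^r F) \leq \binom{n}{r-k} \cdot \mathrm{ex}_k(n-r+k, \mathcal{S}^k F) / \binom{r}{k}$. -/
open Finset

/-- The hypergraph with edge set `E` contains a copy of the hypergraph with edge set `E'`. -/
def HasCopy {V W : Type*} [DecidableEq V] (E : Set (Finset V)) (E' : Set (Finset W)) : Prop :=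
  ∃ f : W → V, Function.Injective f ∧ ∀ e ∈ E', e.image f ∈ E

/-- The `r`-uniform suspension `S^r F` of a graph `F`: add `r-2` new common vertices
to every edge of `F`. -/
def suspEdges {α : Type*} [DecidableEq α] (F : SimpleGraph α) (r : ℕ) :
    Set (Finset (α ⊕ Fin (r - 2))) :=
  { s | ∃ a b, F.Adj a b ∧
      s = ({Sum.inl a, Sum.inl b} : Finset (α ⊕ Fin (r - 2))) ∪ Finset.univ.image Sum.inr }

/-- The graph `G` contains a copy of the graph `F`. -/
def ContainsGraph {α β : Type*} (G : SimpleGraph α) (F : SimpleGraph β) : Prop :=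
  ∃ f : β → α, Function.Injective f ∧ ∀ a b, F.Adj a b → G.Adj (f a) (f b)

/-- The link graph of a set `S` of vertices in the hypergraph `E`, on the vertex set `V \ S`:
`u ~ w` iff `S ∪ {u,w}` is a hyperedge. -/
def linkGraph {V : Type*} [DecidableEq V] (E : Set (Finset V)) (S : Finset V) :
    SimpleGraph {v : V // v ∉ S} where
  Adj u w := u ≠ w ∧ S ∪ {(u : V), (w : V)} ∈ E
  symm := by
    constructor
    intro u w h
    refine ⟨h.1.symm, ?_⟩
    have h2 := h.2
    rwa [Finset.pair_comm (u : V) (w : V)] at h2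
  loopless := by constructor; intro u h; exact h.1 rfl

/-- The link graph of a vertex `v` in a 3-uniform hypergraph `E`:
`u ~ w` iff `{v,u,w}` is a hyperedge. -/
def vlink {V : Type*} [DecidableEq V] (E : Set (Finset V)) (v : V) : SimpleGraph V where
  Adj u w := u ≠ w ∧ ({v, u, w} : Finset V) ∈ E
  symm := by
    constructor
    intro u w h
    refine ⟨h.1.symm, ?_⟩
    have h2 := h.2
    rwa [Finset.pair_comm u w] at h2
  loopless := by constructor; intro u h; exact h.1 rfl

/-- A graph is a matching: any two edges sharing a vertex coincide. -/
def IsMatchingGraph {V : Type*} (G : SimpleGraph V) : Prop :=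
  ∀ ⦃a b c : V⦄, G.Adj a b → G.Adj a c → b = c

/-- The graph `P₃ ∪ K₂`: a path 0-1-2 plus a disjoint edge 3-4. -/
def P3K2 : SimpleGraph (Fin 5) :=
  SimpleGraph.fromRel fun x y => (x = 0 ∧ y = 1) ∨ (x = 1 ∧ y = 2) ∨ (x = 3 ∧ y = 4)

/-- `E'` is a subhypergraph of some blowup of `E`: there is a map of vertices carrying every
edge of `E'` (injectively, by uniformity) onto an edge of `E`. -/
def SubBlowup {W V : Type*} [DecidableEq V] (E' : Set (Finset W)) (E : Set (Finset V)) : Prop :=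
  ∃ g : W → V, ∀ e ∈ E', e.image g ∈ E

/-- The number of (labelled) copies of the hypergraph `E'` in the hypergraph `E`. -/
noncomputable def copyCount {W V : Type*} [DecidableEq V]
    (E' : Set (Finset W)) (E : Set (Finset V)) : ℕ :=
  Nat.card {f : W → V // Function.Injective f ∧ ∀ e ∈ E', e.image f ∈ E}

/-- The Turán number `ex_r(n, F)`: the maximum number of hyperedges in an `n`-vertex
`r`-uniform hypergraph containing no copy of `F`. -/
noncomputable def exTuran (n r : ℕ) {W : Type*} (F : Set (Finset W)) : ℕ :=
  sSup { m | ∃ E : Finset (Finset (Fin n)),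
      (∀ e ∈ E, e.card = r) ∧ ¬ HasCopy (↑E : Set (Finset (Fin n))) F ∧ E.card = m }

/-- The graph `H(t)`: two disjoint copies of `K_{t,t}` (parts 0,1 and 2,3) and a triangle;
the triangle vertex `i` (for `i = 0,1,2`) is completely joined to part `i`. -/
def Hgraph (t : ℕ) : SimpleGraph (Fin 4 × Fin t ⊕ Fin 3) :=
  SimpleGraph.fromRel fun x y =>
    match x, y with
    | Sum.inl (p, _), Sum.inl (q, _) => (p = 0 ∧ q = 1) ∨ (p = 2 ∧ q = 3)
    | Sum.inr i, Sum.inl (q, _) => (q : ℕ) = (i : ℕ)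
    | Sum.inr _, Sum.inr _ => True
    | _, _ => False

/-- The graph `Q(t)`: independent sets `U_0,…,U_3` of size `t` and a triangle `v_0v_1v_2`;
for `i ≤ 2`, the vertex `v_i` and every vertex of `U_3` are joined to every vertex of `U_i`. -/
def Qgraph (t : ℕ) : SimpleGraph (Fin 4 × Fin t ⊕ Fin 3) :=
  SimpleGraph.fromRel fun x y =>
    match x, y with
    | Sum.inl (p, _), Sum.inl (q, _) => p = 3 ∧ q ≠ 3
    | Sum.inr i, Sum.inl (q, _) => (q : ℕ) = (i : ℕ)
    | Sum.inr _, Sum.inr _ => True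
    | _, _ => False
lemma exTuran_bddAbove (n r : ℕ) {W : Type*} (G : Set (Finset W)) :
    BddAbove { m | ∃ E : Finset (Finset (Fin n)),
      (∀ e ∈ E, e.card = r) ∧ ¬ HasCopy (↑E : Set (Finset (Fin n))) G ∧ E.card = m } := by
  refine ⟨(Finset.univ : Finset (Finset (Fin n))).card, ?_⟩
  rintro m ⟨E, -, -, rfl⟩
  exact Finset.card_le_univ E

lemma lemA {α : Type*} [DecidableEq α] (F : SimpleGraph α) (r k n : ℕ)
    (hk : 2 ≤ k) (hkr : k < r)
    (E : Finset (Finset (Fin n)))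
    (hfree : ¬ HasCopy (↑E : Set (Finset (Fin n))) (suspEdges F r))
    (S : Finset (Fin n)) (hS : S.card = r - k)
    (f : α ⊕ Fin (k - 2) → Fin n) (hfinj : Function.Injective f)
    (hfS : ∀ x, f x ∉ S)
    (hedge : ∀ e ∈ suspEdges F k, (e.image f) ∪ S ∈ E) : False := by
  apply hfree
  have e1 : Fin (r - k) ≃ ↥S := (finCongr hS.symm).trans S.equivFin.symm
  set σ : Fin (r - k) → Fin n := fun j => ((e1 j : ↥S) : Fin n) with hσ
  have hσinj : Function.Injective σ := fun j1 j2 h =>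
    e1.injective (Subtype.ext h)
  have hσS : ∀ j, σ j ∈ S := fun j => (e1 j).2
  have hσsurj : ∀ x ∈ S, ∃ j, σ j = x := fun x hx =>
    ⟨e1.symm ⟨x, hx⟩, by simp [hσ]⟩
  set h : α ⊕ Fin (r - 2) → Fin n := fun x =>
    match x with
    | Sum.inl a => f (Sum.inl a)
    | Sum.inr i => if hi : (i : ℕ) < k - 2 then f (Sum.inr ⟨i, hi⟩)
        else σ ⟨(i : ℕ) - (k - 2), by have := i.isLt; omega⟩ with hh
  have hne : ∀ (x : α ⊕ Fin (k - 2)) (j : Fin (r - k)), f x ≠ σ j := by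
    intro x j hc
    exact hfS x (hc ▸ hσS j)
  refine ⟨h, ?_, ?_⟩
  · intro x y hxy
    rcases x with a | i <;> rcases y with b | j
    · have := hfinj hxy
      simpa using this
    · simp only [hh] at hxy
      by_cases hj : (j : ℕ) < k - 2
      · rw [dif_pos hj] at hxy
        exact absurd (hfinj hxy) (by simp)
      · rw [dif_neg hj] at hxy
        exact absurd hxy (hne _ _)
    · simp only [hh] at hxy
      by_cases hi : (i : ℕ) < k - 2
      · rw [dif_pos hi] at hxy
        exact absurd (hfinj hxy.symm) (by simp)
      · rw [dif_neg hi] at hxy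
        exact absurd hxy.symm (hne _ _)
    · simp only [hh] at hxy
      by_cases hi : (i : ℕ) < k - 2 <;> by_cases hj : (j : ℕ) < k - 2
      · rw [dif_pos hi, dif_pos hj] at hxy
        have := hfinj hxy
        simp only [Sum.inr.injEq, Fin.mk.injEq] at this
        exact congrArg Sum.inr (Fin.ext this)
      · rw [dif_pos hi, dif_neg hj] at hxy
        exact absurd hxy (hne _ _)
      · rw [dif_neg hi, dif_pos hj] at hxy
        exact absurd hxy.symm (hne _ _)
      · rw [dif_neg hi, dif_neg hj] at hxy
        have := hσinj hxy
        simp only [Fin.mk.injEq] at this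
        have hi2 := i.isLt
        have hj2 := j.isLt
        exact congrArg Sum.inr (Fin.ext (by omega))
  · rintro s ⟨a, b, hab, rfl⟩
    have hs' : ({Sum.inl a, Sum.inl b} : Finset (α ⊕ Fin (k - 2))) ∪
        Finset.univ.image Sum.inr ∈ suspEdges F k := ⟨a, b, hab, rfl⟩
    have hE := hedge _ hs'
    have himg : (({Sum.inl a, Sum.inl b} : Finset (α ⊕ Fin (r - 2))) ∪
        Finset.univ.image Sum.inr).image h =
        ((({Sum.inl a, Sum.inl b} : Finset (α ⊕ Fin (k - 2))) ∪
          Finset.univ.image Sum.inr).image f) ∪ S := by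
      ext x
      simp only [Finset.mem_image, Finset.mem_union, Finset.mem_insert,
        Finset.mem_singleton, Finset.mem_image, Finset.mem_univ, true_and]
      constructor
      · rintro ⟨y, hy, rfl⟩
        rcases hy with (rfl | rfl) | ⟨i, -, rfl⟩
        · exact Or.inl ⟨Sum.inl a, Or.inl (Or.inl rfl), rfl⟩
        · exact Or.inl ⟨Sum.inl b, Or.inl (Or.inr rfl), rfl⟩
        · simp only [hh]
          by_cases hi : (i : ℕ) < k - 2
          · rw [dif_pos hi]
            exact Or.inl ⟨Sum.inr ⟨i, hi⟩, Or.inr ⟨⟨i, hi⟩, rfl⟩, rfl⟩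
          · rw [dif_neg hi]
            exact Or.inr (hσS _)
      · rintro (⟨y, hy, rfl⟩ | hx)
        · rcases hy with (rfl | rfl) | ⟨j, rfl⟩
          · exact ⟨Sum.inl a, Or.inl (Or.inl rfl), rfl⟩
          · exact ⟨Sum.inl b, Or.inl (Or.inr rfl), rfl⟩
          · have hjlt : (j : ℕ) < r - 2 := by have := j.isLt; omega
            refine ⟨Sum.inr ⟨j, hjlt⟩, Or.inr ⟨⟨j, hjlt⟩, rfl⟩, ?_⟩
            simp only [hh]
            rw [dif_pos (show ((⟨(j : ℕ), hjlt⟩ : Fin (r - 2)) : ℕ) < k - 2 from j.isLt)]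
        · obtain ⟨j, rfl⟩ := hσsurj x hx
          have hjlt : (j : ℕ) + (k - 2) < r - 2 := by have := j.isLt; omega
          refine ⟨Sum.inr ⟨(j : ℕ) + (k - 2), hjlt⟩, Or.inr ⟨_, rfl⟩, ?_⟩
          simp only [hh]
          rw [dif_neg (by simp)]
          congr 1
          ext
          simp
    rw [himg]
    exact_mod_cast hE

lemma lemB {α : Type*} [DecidableEq α] (F : SimpleGraph α) (r k n : ℕ)
    (hk : 2 ≤ k) (hkr : k < r) (hn : r ≤ n)
    (E : Finset (Finset (Fin n))) (hunif : ∀ e ∈ E, e.card = r)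
    (hfree : ¬ HasCopy (↑E : Set (Finset (Fin n))) (suspEdges F r))
    (S : Finset (Fin n)) (hS : S.card = r - k) :
    (E.filter (fun e => S ⊆ e)).card ≤ exTuran (n - r + k) k (suspEdges F k) := by
  classical
  set T : Finset (Fin n) := Sᶜ with hTdef
  have hT : T.card = n - r + k := by
    rw [hTdef, Finset.card_compl, hS, Fintype.card_fin]
    omega
  have hpos : 0 < n - r + k := by omega
  have equ : ↥T ≃ Fin (n - r + k) := T.equivFin.trans (finCongr hT)
  set ψ : Fin n → Fin (n - r + k) := fun x =>
    if h : x ∈ T then equ ⟨x, h⟩ else ⟨0, hpos⟩ with hψ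
  set ι : Fin (n - r + k) → Fin n := fun j => ((equ.symm j : ↥T) : Fin n) with hι
  have hιψ : ∀ x ∈ T, ι (ψ x) = x := by
    intro x hx
    simp only [hψ, hι, dif_pos hx, Equiv.symm_apply_apply]
  have hιT : ∀ j, ι j ∈ T := fun j => (equ.symm j).2
  have hψι : ∀ j, ψ (ι j) = j := by
    intro j
    simp only [hψ, hι, dif_pos (hιT j)]
    rw [dif_pos (equ.symm j).2]
    exact equ.apply_symm_apply j
  have hιinj : Function.Injective ι := by
    intro j1 j2 h
    rw [← hψι j1, ← hψι j2, h]
  set L : Finset (Finset (Fin n)) := (E.filter (fun e => S ⊆ e)).image (· \ S) with hL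
  have hLsub : ∀ t ∈ L, t ⊆ T := by
    rintro t ht
    rw [hL, Finset.mem_image] at ht
    obtain ⟨e, -, rfl⟩ := ht
    intro x hx
    rw [hTdef, Finset.mem_compl]
    exact (Finset.mem_sdiff.1 hx).2
  have hLcard : ∀ t ∈ L, t.card = k := by
    rintro t ht
    rw [hL, Finset.mem_image] at ht
    obtain ⟨e, he, rfl⟩ := ht
    rw [Finset.mem_filter] at he
    rw [Finset.card_sdiff_of_subset he.2, hunif e he.1, hS]
    omega
  have hLunion : ∀ t ∈ L, t ∪ S ∈ E := by
    rintro t ht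
    rw [hL, Finset.mem_image] at ht
    obtain ⟨e, he, rfl⟩ := ht
    rw [Finset.mem_filter] at he
    rw [Finset.sdiff_union_of_subset he.2]
    exact he.1
  set E' : Finset (Finset (Fin (n - r + k))) := L.image (fun t => t.image ψ) with hE'
  have hback : ∀ t ∈ L, (t.image ψ).image ι = t := by
    intro t ht
    have hEq : Set.EqOn (ι ∘ ψ) id ↑t := fun x hx => hιψ x (hLsub t ht hx)
    rw [Finset.image_image, Finset.image_congr hEq, Finset.image_id]
  have h1 : (E.filter (fun e => S ⊆ e)).card = L.card := by
    rw [hL]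
    refine (Finset.card_image_of_injOn ?_).symm
    intro e1 h1 e2 h2 he
    dsimp only at he
    rw [Finset.mem_coe, Finset.mem_filter] at h1 h2
    rw [← Finset.sdiff_union_of_subset h1.2, ← Finset.sdiff_union_of_subset h2.2, he]
  have h2 : L.card = E'.card := by
    rw [hE']
    refine (Finset.card_image_of_injOn ?_).symm
    intro t1 ht1 t2 ht2 he
    dsimp only at he
    rw [← hback t1 ht1, ← hback t2 ht2, he]
  have hunif' : ∀ e' ∈ E', e'.card = k := by
    intro e' he'
    rw [hE', Finset.mem_image] at he'
    obtain ⟨t, ht, rfl⟩ := he'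
    rw [Finset.card_image_of_injOn, hLcard t ht]
    intro x hx y hy hxy
    rw [← hιψ x (hLsub t ht hx), ← hιψ y (hLsub t ht hy), hxy]
  have hfree' : ¬ HasCopy (↑E' : Set (Finset (Fin (n - r + k)))) (suspEdges F k) := by
    rintro ⟨f, hfinj, hfedge⟩
    refine lemA F r k n hk hkr E hfree S hS (ι ∘ f) (hιinj.comp hfinj) ?_ ?_
    · intro x
      have := hιT (f x)
      rw [hTdef, Finset.mem_compl] at this
      exact this
    · intro e he
      have := hfedge e he
      rw [Finset.mem_coe, hE', Finset.mem_image] at this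
      obtain ⟨t, ht, hteq⟩ := this
      have : e.image (ι ∘ f) = t := by
        rw [← Finset.image_image, ← hteq, hback t ht]
      rw [this]
      exact_mod_cast hLunion t ht
  calc (E.filter (fun e => S ⊆ e)).card = E'.card := by rw [h1, h2]
    _ ≤ exTuran (n - r + k) k (suspEdges F k) :=
        le_csSup (exTuran_bddAbove _ _ _) ⟨E', hunif', hfree', rfl⟩

/-- for `r > k ≥ 2` and `n ≥ r`,
`ex_r(n, S^r F) ≤ C(n, r-k) ⬝ ex_k(n-r+k, S^k F) / C(r, k)` (stated multiplied out). -/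
theorem stmt0 {α : Type*} [DecidableEq α] (F : SimpleGraph α) (r k n : ℕ)
    (hk : 2 ≤ k) (hkr : k < r) (hn : r ≤ n) :
    exTuran n r (suspEdges F r) * r.choose k ≤
      n.choose (r - k) * exTuran (n - r + k) k (suspEdges F k) := by
  classical
  set A := { m | ∃ E : Finset (Finset (Fin n)),
      (∀ e ∈ E, e.card = r) ∧ ¬ HasCopy (↑E : Set (Finset (Fin n))) (suspEdges F r) ∧
      E.card = m } with hA
  have hEx : exTuran n r (suspEdges F r) = sSup A := rfl
  rcases A.eq_empty_or_nonempty with hemp | hne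
  · rw [hEx, hemp, csSup_empty]
    simp
  · obtain ⟨E, hunif, hfree, hcard⟩ := Nat.sSup_mem hne (exTuran_bddAbove n r _)
    rw [hEx, ← hcard]
    have hcount : E.card * r.choose k =
        ∑ S ∈ Finset.powersetCard (r - k) (Finset.univ : Finset (Fin n)),
          (E.filter (fun e => S ⊆ e)).card := by
      have key : ∀ e ∈ E,
          ((Finset.powersetCard (r - k) (Finset.univ : Finset (Fin n))).filter
            (fun S => S ⊆ e)).card = r.choose k := by
        intro e he
        have heq : (Finset.powersetCard (r - k) (Finset.univ : Finset (Fin n))).filter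
            (fun S => S ⊆ e) = Finset.powersetCard (r - k) e := by
          ext S
          simp only [Finset.mem_filter, Finset.mem_powersetCard, Finset.subset_univ, true_and]
          tauto
        rw [heq, Finset.card_powersetCard, hunif e he, Nat.choose_symm hkr.le]
      calc E.card * r.choose k = ∑ _e ∈ E, r.choose k := by
            rw [Finset.sum_const, smul_eq_mul]
        _ = ∑ e ∈ E, ((Finset.powersetCard (r - k) (Finset.univ : Finset (Fin n))).filter
              (fun S => S ⊆ e)).card :=
            Finset.sum_congr rfl (fun e he => (key e he).symm)
        _ = ∑ e ∈ E, ∑ S ∈ Finset.powersetCard (r - k) (Finset.univ : Finset (Fin n)),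
              if S ⊆ e then 1 else 0 := by
            simp only [Finset.card_filter]
        _ = ∑ S ∈ Finset.powersetCard (r - k) (Finset.univ : Finset (Fin n)), ∑ e ∈ E,
              if S ⊆ e then 1 else 0 := Finset.sum_comm
        _ = ∑ S ∈ Finset.powersetCard (r - k) (Finset.univ : Finset (Fin n)),
              (E.filter (fun e => S ⊆ e)).card := by
            simp only [Finset.card_filter]
    rw [hcount]
    calc ∑ S ∈ Finset.powersetCard (r - k) (Finset.univ : Finset (Fin n)),
          (E.filter (fun e => S ⊆ e)).card
        ≤ ∑ _S ∈ Finset.powersetCard (r - k) (Finset.univ : Finset (Fin n)),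
            exTuran (n - r + k) k (suspEdges F k) := by
          refine Finset.sum_le_sum (fun S hSmem => ?_)
          exact lemB F r k n hk hkr hn E hunif hfree S
            (Finset.mem_powersetCard.1 hSmem).2
      _ = n.choose (r - k) * exTuran (n - r + k) k (suspEdges F k) := by
          rw [Finset.sum_const, smul_eq_mul, Finset.card_powersetCard,
            Finset.card_univ, Fintype.card_fin]
end

section
/- Let $\mathcal{H}$ be a 3-uniform hypergraph on vertex set $V$ containing no copy of $\mathcal{S}^3(P_3 \cup K_2)$ (the suspension of the disjoint union of a path with two edges and a single edge). Let $M \subseteq V$ be the set of vertices whose link graph is a matching (every two edges of the link graph are disjoint), and $S = V \setminus M$. Then no hyperedge of $\mathcal{H}$ contains exactly two vertices of $M$ and one vertex of $S$. -/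
open Finset

set_option maxHeartbeats 2000000 in
/-- in a 3-uniform `S³(P₃ ∪ K₂)`-free hypergraph, no hyperedge has exactly two
vertices with matching link graph and one vertex without: if two vertices of a hyperedge have
matching link graphs, so does the third. -/
theorem stmt5 {V : Type*} [DecidableEq V] (E : Set (Finset V)) (h3 : ∀ e ∈ E, e.card = 3)
    (hfree : ¬ HasCopy E (suspEdges P3K2 3)) :
    ∀ e ∈ E, ∀ u v w : V, e = {u, v, w} → u ≠ v →
      IsMatchingGraph (vlink E u) → IsMatchingGraph (vlink E v) →
      IsMatchingGraph (vlink E w) := by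
  have key : ∀ x y z : V, ({x, y, z} : Finset V) ∈ E → x ≠ y ∧ x ≠ z ∧ y ≠ z := by
    intro x y z hxyz
    have hc := h3 _ hxyz
    refine ⟨?_, ?_, ?_⟩ <;> rintro rfl
    · have hsub : ({x, x, z} : Finset V) ⊆ {x, z} := by intro t; simp; try tauto
      have h1 : ({x, x, z} : Finset V).card ≤ ({x, z} : Finset V).card :=
        Finset.card_le_card hsub
      have h2 : ({x, z} : Finset V).card ≤ 2 :=
        (Finset.card_insert_le _ _).trans (by simp)
      omega
    · have hsub : ({x, y, x} : Finset V) ⊆ {x, y} := by intro t; simp; try tauto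
      have h1 : ({x, y, x} : Finset V).card ≤ ({x, y} : Finset V).card :=
        Finset.card_le_card hsub
      have h2 : ({x, y} : Finset V).card ≤ 2 :=
        (Finset.card_insert_le _ _).trans (by simp)
      omega
    · have hsub : ({x, y, y} : Finset V) ⊆ {x, y} := by intro t; simp; try tauto
      have h1 : ({x, y, y} : Finset V).card ≤ ({x, y} : Finset V).card :=
        Finset.card_le_card hsub
      have h2 : ({x, y} : Finset V).card ≤ 2 :=
        (Finset.card_insert_le _ _).trans (by simp)
      omega
  intro e he u v w hew huv hmu hmv
  intro a b c hab hac
  by_contra hbc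
  subst hew
  obtain ⟨hab1, hab2⟩ := hab
  obtain ⟨hac1, hac2⟩ := hac
  obtain ⟨_, huw, hvw⟩ := key u v w he
  obtain ⟨hwa, hwb, hab'⟩ := key w a b hab2
  obtain ⟨_, hwc, hac'⟩ := key w a c hac2
  -- basic edge in various orders
  have hwuv : ({w, u, v} : Finset V) ∈ E := by
    have : ({w, u, v} : Finset V) = {u, v, w} := by ext t; simp; try tauto
    rw [this]; exact he
  -- u ≠ a
  have hua : u ≠ a := by
    rintro rfl
    have h1 : (vlink E u).Adj w b := ⟨hwb, by
      have : ({u, w, b} : Finset V) = {w, u, b} := by ext t; simp; try tauto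
      rw [this]; exact hab2⟩
    have h2 : (vlink E u).Adj w c := ⟨hwc, by
      have : ({u, w, c} : Finset V) = {w, u, c} := by ext t; simp; try tauto
      rw [this]; exact hac2⟩
    exact hbc (hmu h1 h2)
  -- v ≠ a
  have hva : v ≠ a := by
    rintro rfl
    have h1 : (vlink E v).Adj w b := ⟨hwb, by
      have : ({v, w, b} : Finset V) = {w, v, b} := by ext t; simp; try tauto
      rw [this]; exact hab2⟩
    have h2 : (vlink E v).Adj w c := ⟨hwc, by
      have : ({v, w, c} : Finset V) = {w, v, c} := by ext t; simp; try tauto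
      rw [this]; exact hac2⟩
    exact hbc (hmv h1 h2)
  -- u link adjacency to w,v
  have huwv : (vlink E u).Adj w v := ⟨hvw.symm, by
    have : ({u, w, v} : Finset V) = {w, u, v} := by ext t; simp; try tauto
    rw [this]; exact hwuv⟩
  have hvwu : (vlink E v).Adj w u := ⟨huw.symm, by
    have : ({v, w, u} : Finset V) = {w, u, v} := by ext t; simp; try tauto
    rw [this]; exact hwuv⟩
  -- u ≠ b
  have hub : u ≠ b := by
    rintro rfl
    have h1 : (vlink E u).Adj w a := ⟨hwa, by
      have : ({u, w, a} : Finset V) = {w, a, u} := by ext t; simp; try tauto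
      rw [this]; exact hab2⟩
    exact hva (hmu h1 huwv).symm
  -- u ≠ c
  have huc : u ≠ c := by
    rintro rfl
    have h1 : (vlink E u).Adj w a := ⟨hwa, by
      have : ({u, w, a} : Finset V) = {w, a, u} := by ext t; simp; try tauto
      rw [this]; exact hac2⟩
    exact hva (hmu h1 huwv).symm
  -- v ≠ b
  have hvb : v ≠ b := by
    rintro rfl
    have h1 : (vlink E v).Adj w a := ⟨hwa, by
      have : ({v, w, a} : Finset V) = {w, a, v} := by ext t; simp; try tauto
      rw [this]; exact hab2⟩
    exact hua (hmv h1 hvwu).symm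
  -- v ≠ c
  have hvc : v ≠ c := by
    rintro rfl
    have h1 : (vlink E v).Adj w a := ⟨hwa, by
      have : ({v, w, a} : Finset V) = {w, a, v} := by ext t; simp; try tauto
      rw [this]; exact hac2⟩
    exact hua (hmv h1 hvwu).symm
  -- build the copy
  apply hfree
  set g : Fin 5 → V := ![b, a, c, u, v] with hg
  have hg0 : g 0 = b := rfl
  have hg1 : g 1 = a := rfl
  have hg2 : g 2 = c := rfl
  have hg3 : g 3 = u := rfl
  have hg4 : g 4 = v := rfl
  have hgw : ∀ i : Fin 5, g i ≠ w := by
    intro i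
    fin_cases i
    · exact fun h => hwb h.symm
    · exact fun h => hwa h.symm
    · exact fun h => hwc h.symm
    · exact huw
    · exact hvw
  have hginj : Function.Injective g := by
    intro i j hij
    fin_cases i <;> fin_cases j
    · rfl
    · exact absurd hij (Ne.symm hab')
    · exact absurd hij hbc
    · exact absurd hij (Ne.symm hub)
    · exact absurd hij (Ne.symm hvb)
    · exact absurd hij hab'
    · rfl
    · exact absurd hij hac'
    · exact absurd hij (Ne.symm hua)
    · exact absurd hij (Ne.symm hva)
    · exact absurd hij (Ne.symm hbc)
    · exact absurd hij (Ne.symm hac')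
    · rfl
    · exact absurd hij (Ne.symm huc)
    · exact absurd hij (Ne.symm hvc)
    · exact absurd hij hub
    · exact absurd hij hua
    · exact absurd hij huc
    · rfl
    · exact absurd hij huv
    · exact absurd hij hvb
    · exact absurd hij hva
    · exact absurd hij hvc
    · exact absurd hij (Ne.symm huv)
    · rfl
  refine ⟨Sum.elim g (fun _ => w), ?_, ?_⟩
  · rintro (i | i) (j | j) h
    · exact congrArg Sum.inl (hginj h)
    · exact absurd h (hgw i)
    · exact absurd h.symm (hgw j)
    · have hi := i.isLt
      have hj := j.isLt
      exact congrArg Sum.inr (Fin.ext (by omega))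
  · rintro s ⟨p, q, hpq, rfl⟩
    have himg : ∀ p q : Fin 5,
        (({Sum.inl p, Sum.inl q} : Finset (Fin 5 ⊕ Fin (3 - 2))) ∪
          Finset.univ.image Sum.inr).image (Sum.elim g (fun _ => w)) = {g p, g q, w} := by
      intro p q
      have huniv : (Finset.univ : Finset (Fin (3 - 2))) = {0} := by decide
      rw [Finset.image_union, huniv]
      simp [Finset.image_insert, Finset.image_singleton]
    rw [himg]
    simp only [P3K2, SimpleGraph.fromRel_adj] at hpq
    obtain ⟨hne, (⟨rfl, rfl⟩ | ⟨rfl, rfl⟩ | ⟨rfl, rfl⟩) | (⟨rfl, rfl⟩ | ⟨rfl, rfl⟩ | ⟨rfl, rfl⟩)⟩ := hpq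
    · rw [hg0, hg1]
      have : ({b, a, w} : Finset V) = {w, a, b} := by ext t; simp; try tauto
      rw [this]; exact hab2
    · rw [hg1, hg2]
      have : ({a, c, w} : Finset V) = {w, a, c} := by ext t; simp; try tauto
      rw [this]; exact hac2
    · rw [hg3, hg4]
      have : ({u, v, w} : Finset V) = {w, u, v} := by ext t; simp; try tauto
      rw [this]; exact hwuv
    · rw [hg1, hg0]
      have : ({a, b, w} : Finset V) = {w, a, b} := by ext t; simp; try tauto
      rw [this]; exact hab2
    · rw [hg2, hg1]
      have : ({c, a, w} : Finset V) = {w, a, c} := by ext t; simp; try tauto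
      rw [this]; exact hac2
    · rw [hg4, hg3]
      have : ({v, u, w} : Finset V) = {w, u, v} := by ext t; simp; try tauto
      rw [this]; exact hwuv
end

section
/- Let $\mathcal{H}$ be a 3-uniform hypergraph containing no copy of $\mathcal{S}^3(P_3 \cup K_2)$, let $M$ be the set of vertices whose link graph is a matching, and $S$ its complement. Then for every $u \in M$ and $v \in S$, there is at most one hyperedge of $\mathcal{H}$ containing both $u$ and $v$. -/
open Finset

/-- in a 3-uniform `S³(P₃ ∪ K₂)`-free hypergraph, for `u ∈ M` (matching link)
and `v ∈ S` (non-matching link) there is at most one hyperedge containing both `u` and `v`. -/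
theorem stmt6 {V : Type*} [DecidableEq V] (E : Set (Finset V)) (h3 : ∀ e ∈ E, e.card = 3)
    (hfree : ¬ HasCopy E (suspEdges P3K2 3)) (u v : V)
    (hu : IsMatchingGraph (vlink E u)) (hv : ¬ IsMatchingGraph (vlink E v)) :
    ∀ e₁ ∈ E, ∀ e₂ ∈ E, u ∈ e₁ → v ∈ e₁ → u ∈ e₂ → v ∈ e₂ → e₁ = e₂ := by
  have huv : u ≠ v := by rintro rfl; exact hv hu
  have key : ∀ e ∈ E, u ∈ e → v ∈ e → ∃ a, a ≠ u ∧ a ≠ v ∧ e = {u, v, a} := by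
    intro e he hue hve
    have hc : e.card = 3 := h3 e he
    have hsub : ({u, v} : Finset V) ⊆ e := by
      intro x hx
      simp only [Finset.mem_insert, Finset.mem_singleton] at hx
      rcases hx with rfl | rfl <;> assumption
    have hne : (e \ {u, v}).Nonempty := by
      rw [← Finset.card_pos, Finset.card_sdiff_of_subset hsub, hc,
        Finset.card_insert_of_notMem (by simpa using huv), Finset.card_singleton]
      norm_num
    obtain ⟨a, ha⟩ := hne
    rw [Finset.mem_sdiff, Finset.mem_insert, Finset.mem_singleton] at ha
    push_neg at ha
    refine ⟨a, ha.2.1, ha.2.2, ?_⟩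
    refine (Finset.eq_of_subset_of_card_le ?_ ?_).symm
    · intro x hx
      simp only [Finset.mem_insert, Finset.mem_singleton] at hx
      rcases hx with rfl | rfl | rfl
      · exact hue
      · exact hve
      · exact ha.1
    · rw [hc]
      rw [Finset.card_insert_of_notMem, Finset.card_insert_of_notMem, Finset.card_singleton]
      · simpa using (ha.2.2).symm
      · simp only [Finset.mem_insert, Finset.mem_singleton]
        push_neg
        exact ⟨huv, Ne.symm ha.2.1⟩
  intro e₁ he₁ e₂ he₂ hu1 hv1 hu2 hv2
  obtain ⟨a, hau, hav, rfl⟩ := key e₁ he₁ hu1 hv1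
  obtain ⟨b, hbu, hbv, rfl⟩ := key e₂ he₂ hu2 hv2
  have h1 : (vlink E u).Adj v a := ⟨Ne.symm hav, he₁⟩
  have h2 : (vlink E u).Adj v b := ⟨Ne.symm hbv, he₂⟩
  rw [hu h1 h2]
end

section
/- Let $\mathcal{H}$ be a 3-uniform hypergraph containing no copy of $\mathcal{S}^3(P_3 \cup K_2)$, and let $M$ be the set of vertices whose link graph is a matching. Then the induced subhypergraph $\mathcal{H}[M]$ is linear: every pair of vertices of $M$ is contained in at most one hyperedge of $\mathcal{H}[M]$. Consequently, the number of hyperedges of $\mathcal{H}$ lying entirely inside $M$ is at most $|M|(|M|-1)/6$. -/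
open Finset

/-- in a 3-uniform `S³(P₃ ∪ K₂)`-free hypergraph, the subhypergraph induced on
`M` (vertices with matching link graph) is linear, and hence has at most `|M|(|M|-1)/6`
hyperedges. -/
theorem stmt7 {V : Type*} [Fintype V] [DecidableEq V] (E : Finset (Finset V))
    (h3 : ∀ e ∈ E, e.card = 3)
    (hfree : ¬ HasCopy (↑E : Set (Finset V)) (suspEdges P3K2 3)) :
    let M : Set V := {x | IsMatchingGraph (vlink (↑E : Set (Finset V)) x)}
    (∀ e₁ ∈ E, ∀ e₂ ∈ E,
        (∀ x ∈ e₁, x ∈ M) → (∀ x ∈ e₂, x ∈ M) →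
        ∀ u v : V, u ≠ v → u ∈ e₁ → v ∈ e₁ → u ∈ e₂ → v ∈ e₂ → e₁ = e₂) ∧
    6 * {e : Finset V | e ∈ E ∧ ∀ x ∈ e, x ∈ M}.ncard ≤ M.ncard * (M.ncard - 1) := by
  classical
  intro M
  -- helper: extract third vertex
  have third : ∀ e ∈ E, ∀ u v : V, u ≠ v → u ∈ e → v ∈ e →
      ∃ a, a ≠ u ∧ a ≠ v ∧ e = {u, v, a} := by
    intro e he u v huv hu hv
    have hsub : ({u, v} : Finset V) ⊆ e := by
      intro x hx; simp at hx; rcases hx with rfl | rfl <;> assumption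
    have hcuv : ({u, v} : Finset V).card = 2 := Finset.card_pair huv
    have hd : (e \ {u, v}).card = 1 := by
      rw [Finset.card_sdiff_of_subset hsub, h3 e he, hcuv]
    obtain ⟨a, ha⟩ := Finset.card_eq_one.mp hd
    have haM : a ∈ e \ ({u, v} : Finset V) := ha ▸ Finset.mem_singleton_self a
    simp only [Finset.mem_sdiff, Finset.mem_insert, Finset.mem_singleton] at haM
    refine ⟨a, fun h => haM.2 (Or.inl h), fun h => haM.2 (Or.inr h), ?_⟩
    have : e = ({u, v} : Finset V) ∪ (e \ {u, v}) := by
      rw [Finset.union_sdiff_of_subset hsub]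
    rw [this, ha]
    ext x; simp [or_assoc]
  have key : ∀ e₁ ∈ E, ∀ e₂ ∈ E,
      (∀ x ∈ e₁, x ∈ M) → (∀ x ∈ e₂, x ∈ M) →
      ∀ u v : V, u ≠ v → u ∈ e₁ → v ∈ e₁ → u ∈ e₂ → v ∈ e₂ → e₁ = e₂ := by
    intro e₁ he₁ e₂ he₂ hm₁ _ u v huv hu1 hv1 hu2 hv2
    obtain ⟨a, hau, hav, he1⟩ := third e₁ he₁ u v huv hu1 hv1
    obtain ⟨b, hbu, hbv, he2⟩ := third e₂ he₂ u v huv hu2 hv2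
    have huM : IsMatchingGraph (vlink (↑E : Set (Finset V)) u) := hm₁ u hu1
    have hadj1 : (vlink (↑E : Set (Finset V)) u).Adj v a :=
      ⟨fun h => hav h.symm, by rw [← he1]; exact he₁⟩
    have hadj2 : (vlink (↑E : Set (Finset V)) u).Adj v b :=
      ⟨fun h => hbv h.symm, by rw [← he2]; exact he₂⟩
    have hab : a = b := huM hadj1 hadj2
    rw [he1, he2, hab]
  refine ⟨key, ?_⟩
  -- counting part
  set F := E.filter (fun e => ∀ x ∈ e, x ∈ M) with hF
  have hset : {e : Finset V | e ∈ E ∧ ∀ x ∈ e, x ∈ M} = (↑F : Set (Finset V)) := by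
    ext e; simp [hF]
  rw [hset, Set.ncard_coe_finset]
  have hMfin : M.Finite := Set.toFinite M
  rw [Set.ncard_eq_toFinset_card M hMfin]
  set m := hMfin.toFinset.card with hm
  -- pairwise disjoint 2-subsets
  have hdisj : ∀ e₁ ∈ F, ∀ e₂ ∈ F, e₁ ≠ e₂ →
      Disjoint (e₁.powersetCard 2) (e₂.powersetCard 2) := by
    intro e₁ h1 e₂ h2 hne
    rw [Finset.disjoint_left]
    intro p hp1 hp2 
    simp only [Finset.mem_powersetCard] at hp1 hp2
    obtain ⟨u, v, huv, hp⟩ := Finset.card_eq_two.mp hp1.2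
    have h1' := Finset.mem_filter.mp h1
    have h2' := Finset.mem_filter.mp h2
    have hu1 : u ∈ e₁ := hp1.1 (by rw [hp]; simp)
    have hv1 : v ∈ e₁ := hp1.1 (by rw [hp]; simp)
    have hu2 : u ∈ e₂ := hp2.1 (by rw [hp]; simp)
    have hv2 : v ∈ e₂ := hp2.1 (by rw [hp]; simp)
    exact hne (key e₁ h1'.1 e₂ h2'.1 h1'.2 h2'.2 u v huv hu1 hv1 hu2 hv2)
  have hcardB : (F.biUnion (fun e => e.powersetCard 2)).card = 3 * F.card := by
    rw [Finset.card_biUnion hdisj]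
    rw [Finset.sum_congr rfl (fun e he => ?_), Finset.sum_const, smul_eq_mul, mul_comm]
    rw [Finset.card_powersetCard, h3 e (Finset.mem_filter.mp he).1]
    decide
  have hsubB : F.biUnion (fun e => e.powersetCard 2) ⊆ hMfin.toFinset.powersetCard 2 := by
    intro p hp
    simp only [Finset.mem_biUnion] at hp
    obtain ⟨e, he, hpe⟩ := hp
    simp only [Finset.mem_powersetCard] at hpe ⊢
    refine ⟨fun x hx => ?_, hpe.2⟩
    simp only [Set.Finite.mem_toFinset]
    exact (Finset.mem_filter.mp he).2 x (hpe.1 hx)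
  have hle := Finset.card_le_card hsubB
  rw [hcardB, Finset.card_powersetCard, ← hm, Nat.choose_two_right] at hle
  omega
end

section
/- Let $\mathcal{H}$ be a 3-uniform hypergraph containing no copy of $\mathcal{S}^3(P_3 \cup K_2)$, and let $u$ be a vertex whose link graph contains two adjacent edges but is not a star. Then the link graph of $u$ has at least 3 and at most 4 vertices (where the link graph is taken without isolated vertices). Consequently, $u$ has degree at most 6 in $\mathcal{H}$. -/
open Finset

set_option maxHeartbeats 2000000 in
/-- in a 3-uniform `S³(P₃ ∪ K₂)`-free hypergraph, if the link graph of `u`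
contains two adjacent edges but is not a star, then it has between 3 and 4 non-isolated
vertices, and `u` has degree at most 6. -/
theorem stmt8 {V : Type*} [DecidableEq V] (E : Set (Finset V)) (h3 : ∀ e ∈ E, e.card = 3)
    (hfree : ¬ HasCopy E (suspEdges P3K2 3)) (u : V)
    (hP3 : ∃ a b c, (vlink E u).Adj a b ∧ (vlink E u).Adj a c ∧ b ≠ c)
    (hnostar : ¬ ∃ z, ∀ a b, (vlink E u).Adj a b → a = z ∨ b = z) :
    3 ≤ (vlink E u).support.ncard ∧ (vlink E u).support.ncard ≤ 4 ∧
      {e | e ∈ E ∧ u ∈ e}.ncard ≤ 6 := by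
  classical
  set G := vlink E u with hGdef
  obtain ⟨a, b, c, hab, hac, hbc⟩ := hP3
  have hu3 : ∀ x y : V, G.Adj x y → u ≠ x ∧ u ≠ y ∧ x ≠ y := by
    intro x y hxy
    have hm : ({u, x, y} : Finset V) ∈ E := hxy.2
    have hc := h3 _ hm
    refine ⟨?_, ?_, hxy.1⟩
    · intro h
      rw [← h] at hc
      have h1 : ({u, u, y} : Finset V) = {u, y} := by simp
      rw [h1] at hc
      have h2 := Finset.card_insert_le u ({y} : Finset V)
      simp at h2; omega
    · intro h
      rw [← h] at hc
      have h1 : ({u, x, u} : Finset V) = {u, x} := by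
        ext z; simp; tauto
      rw [h1] at hc
      have h2 := Finset.card_insert_le u ({x} : Finset V)
      simp at h2; omega
  have hcomb : ∀ v w : V, ({v, w} : Finset V) ∪ {u} = {u, v, w} := by
    intro v w; ext z; simp; tauto
  -- no P3 ∪ K2 in the link graph
  have hno : ∀ p q r s t : V, G.Adj p q → G.Adj q r → G.Adj s t →
      p ≠ r → s ≠ p → s ≠ q → s ≠ r → t ≠ p → t ≠ q → t ≠ r → False := by
    intro p q r s t h1 h2 hst hpr hsp hsq hsr htp htq htr
    obtain ⟨hup, huq, hpq⟩ := hu3 _ _ h1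
    obtain ⟨-, hur, hqr⟩ := hu3 _ _ h2
    obtain ⟨hus, hut, hstne⟩ := hu3 _ _ hst
    apply hfree
    refine ⟨Sum.elim ![p, q, r, s, t] (fun _ => u), ?_, ?_⟩
    · have n1 := hpq.symm; have n2 := hpr.symm; have n3 := hqr.symm
      have n4 := hstne.symm
      have n5 := hsp.symm; have n6 := hsq.symm; have n7 := hsr.symm
      have n8 := htp.symm; have n9 := htq.symm; have n10 := htr.symm
      have n11 := hup.symm; have n12 := huq.symm; have n13 := hur.symm
      have n14 := hus.symm; have n15 := hut.symm
      rintro (i | i) (j | j) hij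
      · simp only [Sum.elim_inl] at hij
        fin_cases i <;> fin_cases j <;>
          simp only [Matrix.cons_val_zero, Matrix.cons_val_one, Matrix.head_cons,
            Matrix.cons_val_two, Matrix.tail_cons, Matrix.cons_val_three,
            Matrix.cons_val_four] at hij <;>
          first | rfl | exact absurd hij (by assumption)
      · simp only [Sum.elim_inl, Sum.elim_inr] at hij
        fin_cases i <;>
          simp only [Matrix.cons_val_zero, Matrix.cons_val_one, Matrix.head_cons,
            Matrix.cons_val_two, Matrix.tail_cons, Matrix.cons_val_three,
            Matrix.cons_val_four] at hij <;>
          exact absurd hij (by assumption)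
      · simp only [Sum.elim_inl, Sum.elim_inr] at hij
        fin_cases j <;>
          simp only [Matrix.cons_val_zero, Matrix.cons_val_one, Matrix.head_cons,
            Matrix.cons_val_two, Matrix.tail_cons, Matrix.cons_val_three,
            Matrix.cons_val_four] at hij <;>
          exact absurd hij (by assumption)
      · exact congrArg Sum.inr (Subsingleton.elim (α := Fin 1) i j)
    · rintro e ⟨x, y, hxy, rfl⟩
      have hxy' : (x = 0 ∧ y = 1) ∨ (x = 1 ∧ y = 2) ∨ (x = 3 ∧ y = 4) ∨
          (y = 0 ∧ x = 1) ∨ (y = 1 ∧ x = 2) ∨ (y = 3 ∧ x = 4) := by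
        have h := hxy
        simp only [P3K2, SimpleGraph.fromRel_adj] at h
        tauto
      rcases hxy' with ⟨rfl, rfl⟩ | ⟨rfl, rfl⟩ | ⟨rfl, rfl⟩ | ⟨rfl, rfl⟩ | ⟨rfl, rfl⟩ |
        ⟨rfl, rfl⟩
      · have he : (({Sum.inl 0, Sum.inl 1} : Finset (Fin 5 ⊕ Fin (3 - 2))) ∪
            Finset.univ.image Sum.inr).image (Sum.elim ![p, q, r, s, t] fun _ => u)
            = {u, p, q} := by
          ext z; simp [Fin.exists_fin_one]; tauto
        rw [he]; exact h1.2
      · have he : (({Sum.inl 1, Sum.inl 2} : Finset (Fin 5 ⊕ Fin (3 - 2))) ∪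
            Finset.univ.image Sum.inr).image (Sum.elim ![p, q, r, s, t] fun _ => u)
            = {u, q, r} := by
          ext z; simp [Fin.exists_fin_one]; tauto
        rw [he]; exact h2.2
      · have he : (({Sum.inl 3, Sum.inl 4} : Finset (Fin 5 ⊕ Fin (3 - 2))) ∪
            Finset.univ.image Sum.inr).image (Sum.elim ![p, q, r, s, t] fun _ => u)
            = {u, s, t} := by
          ext z; simp [Fin.exists_fin_one]; tauto
        rw [he]; exact hst.2
      · have he : (({Sum.inl 1, Sum.inl 0} : Finset (Fin 5 ⊕ Fin (3 - 2))) ∪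
            Finset.univ.image Sum.inr).image (Sum.elim ![p, q, r, s, t] fun _ => u)
            = {u, q, p} := by
          ext z; simp [Fin.exists_fin_one]; tauto
        rw [he]; exact h1.symm.2
      · have he : (({Sum.inl 2, Sum.inl 1} : Finset (Fin 5 ⊕ Fin (3 - 2))) ∪
            Finset.univ.image Sum.inr).image (Sum.elim ![p, q, r, s, t] fun _ => u)
            = {u, r, q} := by
          ext z; simp [Fin.exists_fin_one]; tauto
        rw [he]; exact h2.symm.2
      · have he : (({Sum.inl 4, Sum.inl 3} : Finset (Fin 5 ⊕ Fin (3 - 2))) ∪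
            Finset.univ.image Sum.inr).image (Sum.elim ![p, q, r, s, t] fun _ => u)
            = {u, t, s} := by
          ext z; simp [Fin.exists_fin_one]; tauto
        rw [he]; exact hst.symm.2
  have hba := hab.symm
  have hca := hac.symm
  have hane : a ≠ b := hab.1
  have hane' : a ≠ c := hac.1
  -- two distinct support vertices outside {a,b,c} give a contradiction
  have key : ∀ d x e y : V, G.Adj d x → G.Adj e y →
      d ≠ a → d ≠ b → d ≠ c → e ≠ a → e ≠ b → e ≠ c → e ≠ d → False := by
    intro d x e y hdx hey hda hdb hdc hea heb hec hed
    have hx : x = a ∨ x = b ∨ x = c := by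
      by_contra hxm
      push_neg at hxm
      exact hno b a c d x hba hac hdx hbc hdb hda hdc hxm.2.1 hxm.1 hxm.2.2
    have hy : y = a ∨ y = b ∨ y = c := by
      by_contra hym
      push_neg at hym
      exact hno b a c e y hba hac hey hbc heb hea hec hym.2.1 hym.1 hym.2.2
    rcases hx with hxv | hxv | hxv <;> rw [hxv] at hdx
    · -- edge d-a
      have hda' : G.Adj a d := hdx.symm
      have hya : y = a := by
        rcases hy with h' | h' | h' <;> rw [h'] at hey
        · exact h'
        · exact (hno c a d e b hca hda' hey (Ne.symm hdc) hec hea hed hbc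
            (Ne.symm hane) (Ne.symm hdb)).elim
        · exact (hno b a d e c hba hda' hey (Ne.symm hdb) heb hea hed hbc.symm
            (Ne.symm hane') (Ne.symm hdc)).elim
      rw [hya] at hey
      have hea' : G.Adj a e := hey.symm
      push_neg at hnostar
      obtain ⟨p, q, hpq, hpa, hqa⟩ : ∃ p q, G.Adj p q ∧ p ≠ a ∧ q ≠ a := by
        obtain ⟨p, q, h1, h2⟩ := hnostar a
        exact ⟨p, q, h1, by tauto, by tauto⟩
      have core : ∀ w1 w2 w3 w4 p q : V, G.Adj a w1 → G.Adj a w2 → G.Adj a w3 →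
          G.Adj a w4 → w1 ≠ w2 → w1 ≠ w3 → w1 ≠ w4 → w2 ≠ w3 → w2 ≠ w4 → w3 ≠ w4 →
          G.Adj p q → q ≠ a → p = w1 → False := by
        intro w1 w2 w3 w4 p q h1 h2' h3' h4 h12 h13 h14 h23 h24 h34 hpq hqa hp
        rw [hp] at hpq
        have g1 : q = w2 ∨ q = w3 := by
          by_contra hq; push_neg at hq
          exact hno w2 a w3 w1 q h2'.symm h3' hpq h23 h12 h1.ne' h13 hq.1 hqa hq.2
        have g2 : q = w2 ∨ q = w4 := by
          by_contra hq; push_neg at hq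
          exact hno w2 a w4 w1 q h2'.symm h4 hpq h24 h12 h1.ne' h14 hq.1 hqa hq.2
        have g3 : q = w3 ∨ q = w4 := by
          by_contra hq; push_neg at hq
          exact hno w3 a w4 w1 q h3'.symm h4 hpq h34 h13 h1.ne' h14 hq.1 hqa hq.2
        rcases g1 with rfl | rfl <;> rcases g2 with h | h <;> rcases g3 with h' | h' <;>
          simp_all
      have hit : p = b ∨ p = c ∨ q = b ∨ q = c := by
        by_contra hq; push_neg at hq
        exact hno b a c p q hba hac hpq hbc hq.1 hpa hq.2.1 hq.2.2.1 hqa hq.2.2.2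
      rcases hit with h | h | h | h
      · exact core b c d e p q hab hac hda' hea' hbc (Ne.symm hdb) (Ne.symm heb)
          (Ne.symm hdc) (Ne.symm hec) (Ne.symm hed) hpq hqa h
      · exact core c b d e p q hac hab hda' hea' hbc.symm (Ne.symm hdc) (Ne.symm hec)
          (Ne.symm hdb) (Ne.symm heb) (Ne.symm hed) hpq hqa h
      · exact core b c d e q p hab hac hda' hea' hbc (Ne.symm hdb) (Ne.symm heb)
          (Ne.symm hdc) (Ne.symm hec) (Ne.symm hed) hpq.symm hpa h
      · exact core c b d e q p hac hab hda' hea' hbc.symm (Ne.symm hdc) (Ne.symm hec)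
          (Ne.symm hdb) (Ne.symm heb) (Ne.symm hed) hpq.symm hpa h
    · -- edge d-b
      have hy' : y = a ∨ y = b := by
        rcases hy with h' | h' | h'
        · left; exact h'
        · right; exact h'
        · rw [h'] at hey
          exact (hno d b a e c hdx hba hey hda hed heb hea (Ne.symm hdc) hbc.symm
            (Ne.symm hane')).elim
      rcases hy' with h' | h' <;> rw [h'] at hey
      · exact hno e a c d b hey hac hdx hec (Ne.symm hed) hda hdc (Ne.symm heb)
          (Ne.symm hane) hbc
      · exact hno e b d a c hey hdx.symm hac hed (Ne.symm hea) hane (Ne.symm hda)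
          (Ne.symm hec) hbc.symm (Ne.symm hdc)
    · -- edge d-c
      have hy' : y = a ∨ y = c := by
        rcases hy with h' | h' | h'
        · left; exact h'
        · rw [h'] at hey
          exact (hno d c a e b hdx hca hey hda hed hec hea (Ne.symm hdb) hbc
            (Ne.symm hane)).elim
        · right; exact h'
      rcases hy' with h' | h' <;> rw [h'] at hey
      · exact hno e a b d c hey hab hdx heb (Ne.symm hed) hda hdb (Ne.symm hec)
          (Ne.symm hane') hbc.symm
      · exact hno e c d a b hey hdx.symm hab hed (Ne.symm hea) hane' (Ne.symm hda)
          (Ne.symm heb) hbc (Ne.symm hdb)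
  -- a finite superset of the support of size ≤ 4
  obtain ⟨S, hsub, hScard⟩ : ∃ S : Finset V, G.support ⊆ ↑S ∧ S.card ≤ 4 := by
    by_cases hex : ∃ d, d ∈ G.support ∧ d ≠ a ∧ d ≠ b ∧ d ≠ c
    · obtain ⟨d, ⟨x, hdx⟩, hda, hdb, hdc⟩ := hex
      refine ⟨{a, b, c, d}, ?_, ?_⟩
      · rintro v ⟨w, hvw⟩
        by_contra hv
        simp only [Finset.coe_insert, Set.mem_insert_iff, Finset.coe_singleton,
          Set.mem_singleton_iff] at hv
        push_neg at hv
        exact key d x v w hdx hvw hda hdb hdc hv.1 hv.2.1 hv.2.2.1 hv.2.2.2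
      · apply le_trans (Finset.card_insert_le _ _)
        have h1 := Finset.card_insert_le b ({c, d} : Finset V)
        have h2 := Finset.card_insert_le c ({d} : Finset V)
        simp only [Finset.card_singleton] at h2 ⊢
        omega
    · refine ⟨{a, b, c}, ?_, ?_⟩
      · intro v hv
        have hv3 : v = a ∨ v = b ∨ v = c := by
          by_contra hvv
          push_neg at hvv
          exact hex ⟨v, hv, hvv.1, hvv.2.1, hvv.2.2⟩
        rcases hv3 with rfl | rfl | rfl <;> simp
      · apply le_trans (Finset.card_insert_le _ _)
        have h2 := Finset.card_insert_le b ({c} : Finset V)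
        simp only [Finset.card_singleton] at h2 ⊢
        omega
  have hfin : G.support.Finite := Set.Finite.subset S.finite_toSet hsub
  refine ⟨?_, ?_, ?_⟩
  · -- lower bound 3
    have h1 : ({a, b, c} : Set V) ⊆ G.support := by
      rintro z (rfl | rfl | rfl)
      exacts [⟨b, hab⟩, ⟨a, hab.symm⟩, ⟨a, hac.symm⟩]
    have h2 := Set.ncard_le_ncard h1 hfin
    have h3' : ({a, b, c} : Set V).ncard = 3 := by
      rw [Set.ncard_eq_three]
      exact ⟨a, b, c, hane, hane', hbc, rfl⟩
    omega
  · -- upper bound 4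
    have h2 := Set.ncard_le_ncard hsub S.finite_toSet
    rw [Set.ncard_coe_finset] at h2
    omega
  · -- degree bound
    have hmap : ∀ e ∈ {e | e ∈ E ∧ u ∈ e},
        e.erase u ∈ (↑(S.powersetCard 2) : Set (Finset V)) := by
      rintro e ⟨heE, heu⟩
      have hecard : e.card = 3 := h3 _ heE
      have hcard2 : (e.erase u).card = 2 := by
        rw [Finset.card_erase_of_mem heu, hecard]
      simp only [Finset.mem_coe]
      rw [Finset.mem_powersetCard]
      refine ⟨?_, hcard2⟩
      intro v hv
      obtain ⟨hvu, hve⟩ := Finset.mem_erase.mp hv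
      -- find the third vertex
      have h1 : ((e.erase u).erase v).card = 1 := by
        rw [Finset.card_erase_of_mem hv, hcard2]
      obtain ⟨w, hw⟩ := Finset.card_eq_one.mp h1
      have hwmem : w ∈ (e.erase u).erase v := by rw [hw]; exact Finset.mem_singleton_self w
      obtain ⟨hwv, hwrest⟩ := Finset.mem_erase.mp hwmem
      obtain ⟨hwu, hwe⟩ := Finset.mem_erase.mp hwrest
      have hsubse : ({u, v, w} : Finset V) ⊆ e := by
        intro z hz
        rcases Finset.mem_insert.mp hz with rfl | hz'
        · exact heu
        rcases Finset.mem_insert.mp hz' with rfl | hz''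
        · exact hve
        · rw [Finset.mem_singleton.mp hz'']; exact hwe
      have hcard3 : ({u, v, w} : Finset V).card = 3 := by
        rw [Finset.card_insert_of_notMem, Finset.card_insert_of_notMem,
          Finset.card_singleton]
        · simp [hwv.symm]
        · simp only [Finset.mem_insert, Finset.mem_singleton]
          push_neg
          exact ⟨Ne.symm hvu, Ne.symm hwu⟩
      have heq : ({u, v, w} : Finset V) = e :=
        Finset.eq_of_subset_of_card_le hsubse (by omega)
      have hadj : G.Adj v w := ⟨Ne.symm hwv, by rw [heq]; exact heE⟩
      exact hsub ⟨w, hadj⟩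
    have hinj : Set.InjOn (fun e : Finset V => e.erase u) {e | e ∈ E ∧ u ∈ e} := by
      rintro e1 ⟨-, h1⟩ e2 ⟨-, h2⟩ h
      simp only at h
      rw [← Finset.insert_erase h1, ← Finset.insert_erase h2, h]
    have h1 := Set.ncard_le_ncard_of_injOn (fun e : Finset V => e.erase u) hmap hinj
      (S.powersetCard 2).finite_toSet
    rw [Set.ncard_coe_finset, Finset.card_powersetCard] at h1
    have h2 : S.card.choose 2 ≤ Nat.choose 4 2 := Nat.choose_le_choose 2 hScard
    simp only [show Nat.choose 4 2 = 6 by decide] at h2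
    omega
end

section
/- Let $\mathcal{H}$ be a 3-uniform hypergraph containing no copy of $\mathcal{S}^3(P_3 \cup K_2)$, and let $S_1$ be the set of vertices whose link graph is a star with at least 2 edges. Then $\mathcal{H}$ has no hyperedge with all three vertices in $S_1$. -/
open Finset

lemma center_mem {V : Type*} [DecidableEq V] (E : Set (Finset V)) (h3 : ∀ e ∈ E, e.card = 3)
    {x z : V} (hz : ∀ a b, (vlink E x).Adj a b → a = z ∨ b = z)
    {e : Finset V} (he : e ∈ E) (hx : x ∈ e) : z ∈ e := by
  have hc := h3 e he
  have hcard : (e.erase x).card = 2 := by rw [Finset.card_erase_of_mem hx, hc]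
  obtain ⟨u, w, huw, hE⟩ := Finset.card_eq_two.mp hcard
  have hu : u ∈ e := Finset.mem_of_mem_erase (by rw [hE]; simp)
  have hw : w ∈ e := Finset.mem_of_mem_erase (by rw [hE]; simp)
  have hne : ({x, u, w} : Finset V) = e := by
    rw [← Finset.insert_erase hx, hE]
  have hadj : (vlink E x).Adj u w := ⟨huw, by rw [hne]; exact he⟩
  rcases hz u w hadj with h | h
  · rwa [← h]
  · rwa [← h]

lemma center_ne {V : Type*} [DecidableEq V] (E : Set (Finset V)) (h3 : ∀ e ∈ E, e.card = 3)
    {x z a : V} (ha : (vlink E x).Adj z a) : z ≠ x := by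
  intro h
  subst h
  have hE := ha.2
  have := h3 _ hE
  have hle : ({z, z, a} : Finset V).card ≤ 2 := by
    rw [Finset.insert_idem]
    exact le_trans (Finset.card_insert_le _ _) (by simp)
  omega

lemma two_path_contra {V : Type*} [DecidableEq V] (E : Set (Finset V))
    (h3 : ∀ e ∈ E, e.card = 3) {a b c : V} (hca : c ≠ a) (hcb : c ≠ b)
    (hstar : ∃ x y, (vlink E a).Adj b x ∧ (vlink E a).Adj b y ∧ x ≠ y)
    (hzb : ∀ u w, (vlink E b).Adj u w → u = c ∨ w = c) : False := by
  obtain ⟨x, y, hx, hy, hxy⟩ := hstar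
  have hbx : b ∈ ({a, b, x} : Finset V) := by simp
  have hby : b ∈ ({a, b, y} : Finset V) := by simp
  have hcx : c ∈ ({a, b, x} : Finset V) := center_mem E h3 hzb hx.2 hbx
  have hcy : c ∈ ({a, b, y} : Finset V) := center_mem E h3 hzb hy.2 hby
  simp only [Finset.mem_insert, Finset.mem_singleton] at hcx hcy
  rcases hcx with h | h | h
  · exact hca h
  · exact hcb h
  · rcases hcy with h' | h' | h'
    · exact hca h'
    · exact hcb h'
    · exact hxy (h ▸ h' ▸ rfl)

/-- in a 3-uniform `S³(P₃ ∪ K₂)`-free hypergraph, no hyperedge lies entirely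
inside `S₁`, the set of vertices whose link graph is a star with at least two edges. -/
theorem stmt9 {V : Type*} [DecidableEq V] (E : Set (Finset V)) (h3 : ∀ e ∈ E, e.card = 3)
    (hfree : ¬ HasCopy E (suspEdges P3K2 3)) :
    ∀ e ∈ E, ¬ ((↑e : Set V) ⊆
      {x | ∃ z, (∀ a b, (vlink E x).Adj a b → a = z ∨ b = z) ∧
        ∃ a b, (vlink E x).Adj z a ∧ (vlink E x).Adj z b ∧ a ≠ b}) := by
  intro e he hsub
  obtain ⟨p, q, r, hpq, hpr, hqr, hE⟩ := Finset.card_eq_three.mp (h3 e he)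
  have hp : p ∈ e := by rw [hE]; simp
  have hq : q ∈ e := by rw [hE]; simp
  have hr : r ∈ e := by rw [hE]; simp
  obtain ⟨zp, hzp, ap, bp, hap, hbp, habp⟩ := hsub hp
  obtain ⟨zq, hzq, aq, bq, haq, hbq, habq⟩ := hsub hq
  obtain ⟨zr, hzr, ar, br, har, hbr, habr⟩ := hsub hr
  have hzpe : zp ∈ e := center_mem E h3 hzp he hp
  have hzqe : zq ∈ e := center_mem E h3 hzq he hq
  have hzre : zr ∈ e := center_mem E h3 hzr he hr
  have hzpnp : zp ≠ p := center_ne E h3 hap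
  have hzqnq : zq ≠ q := center_ne E h3 haq
  have hzrnr : zr ≠ r := center_ne E h3 har
  rw [hE] at hzpe hzqe hzre
  simp only [Finset.mem_insert, Finset.mem_singleton] at hzpe hzqe hzre
  rcases hzpe with h | h | h
  · exact hzpnp h
  · -- zp = q : center of p is q
    subst h
    rcases hzqe with h' | h' | h'
    · -- zq = p : center of q is p
      subst h'
      rcases hzre with h'' | h'' | h''
      · -- zr = p : path r → p → q
        subst h''
        exact two_path_contra E h3 hqr (Ne.symm hpq) ⟨ar, br, har, hbr, habr⟩ hzp
      · -- zr = q : path r → q → p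
        subst h''
        exact two_path_contra E h3 hpr hpq ⟨ar, br, har, hbr, habr⟩ hzq
      · exact hzrnr h''
    · exact hzqnq h'
    · -- zq = r : path p → q → r
      subst h'
      exact two_path_contra E h3 (Ne.symm hpr) (Ne.symm hqr) ⟨ap, bp, hap, hbp, habp⟩ hzq
  · -- zp = r : center of p is r
    subst h
    rcases hzre with h' | h' | h'
    · -- zr = p : center of r is p
      subst h'
      rcases hzqe with h'' | h'' | h''
      · -- zq = p : path q → p → r
        subst h''
        exact two_path_contra E h3 (Ne.symm hqr) (Ne.symm hpr) ⟨aq, bq, haq, hbq, habq⟩ hzp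
      · exact hzqnq h''
      · -- zq = r : path q → r → p
        subst h''
        exact two_path_contra E h3 hpq hpr ⟨aq, bq, haq, hbq, habq⟩ hzr
    · -- zr = q : path p → r → q
      subst h'
      exact two_path_contra E h3 (Ne.symm hpq) hqr ⟨ap, bp, hap, hbp, habp⟩ hzr
    · exact hzrnr h'
end

section
/- For every $n > 33$, every $n$-vertex 3-uniform hypergraph containing no copy of $\mathcal{S}^3(P_3 \cup K_2)$ has at most $\frac{3}{16}n^2 - \frac{n}{8} + \frac{1}{48}$ hyperedges, i.e., $\mathrm{ex}_3(n, \mathcal{S}^3(P_3 \cup K_2)) \leq \frac{1}{3}\binom{(3n-1)/4}{2} + \frac{(3n-1)(n+1)}{32}$. -/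
open Finset

namespace Stmt10

variable {n : ℕ}

def link (E : Finset (Finset (Fin n))) (v : Fin n) : Finset (Finset (Fin n)) :=
  (E.filter fun e => v ∈ e).image fun e => e.erase v

variable {E : Finset (Finset (Fin n))}


lemma mem_link {v : Fin n} {s : Finset (Fin n)} :
    s ∈ link E v ↔ v ∉ s ∧ insert v s ∈ E := by
  constructor
  · intro hs
    simp only [link, mem_image, mem_filter] at hs
    obtain ⟨e, ⟨he, hv⟩, rfl⟩ := hs
    exact ⟨notMem_erase _ _, by rwa [insert_erase hv]⟩
  · rintro ⟨hv, he⟩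
    simp only [link, mem_image, mem_filter]
    exact ⟨insert v s, ⟨he, mem_insert_self _ _⟩, by rw [erase_insert hv]⟩

lemma link_card (hE3 : ∀ e ∈ E, e.card = 3) {v : Fin n} {s : Finset (Fin n)}
    (hs : s ∈ link E v) : s.card = 2 := by
  rw [mem_link] at hs
  have := hE3 _ hs.2
  rw [card_insert_of_notMem hs.1] at this
  omega

lemma pair_mem_link {v a b : Fin n} :
    ({a, b} : Finset (Fin n)) ∈ link E v ↔ v ≠ a ∧ v ≠ b ∧ ({v, a, b} : Finset (Fin n)) ∈ E := by
  rw [mem_link]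
  simp [not_or, and_assoc]

lemma pair_ne {v a b : Fin n} (hE3 : ∀ e ∈ E, e.card = 3)
    (h : ({a, b} : Finset (Fin n)) ∈ link E v) : a ≠ b := by
  intro hab
  have := link_card hE3 h
  subst hab
  simp at this

lemma link_card_eq (v : Fin n) : (link E v).card = (E.filter fun e => v ∈ e).card := by
  apply card_image_of_injOn
  intro e he e' he' h
  simp only [mem_coe, mem_filter] at he he'
  simp only at h
  rw [← insert_erase he.2, h, insert_erase he'.2]


lemma forbidden (hfree : ¬ HasCopy (↑E : Set (Finset (Fin n))) (suspEdges P3K2 3))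
    {v x y z s t : Fin n}
    (hxy : x ≠ y) (hyz : y ≠ z) (hxz : x ≠ z) (hst : s ≠ t)
    (hsx : s ≠ x) (hsy : s ≠ y) (hsz : s ≠ z) (htx : t ≠ x) (hty : t ≠ y) (htz : t ≠ z)
    (hvx : v ≠ x) (hvy : v ≠ y) (hvz : v ≠ z) (hvs : v ≠ s) (hvt : v ≠ t)
    (h1 : ({v, x, y} : Finset (Fin n)) ∈ E) (h2 : ({v, y, z} : Finset (Fin n)) ∈ E)
    (h3 : ({v, s, t} : Finset (Fin n)) ∈ E) : False := by
  apply hfree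
  refine ⟨Sum.elim ![x, y, z, s, t] (fun _ => v), ?_, ?_⟩
  · rintro (a | a) (b | b) hab
    · simp only [Sum.elim_inl] at hab
      congr 1
      fin_cases a <;> fin_cases b <;> simp_all
    · simp only [Sum.elim_inl, Sum.elim_inr] at hab
      exfalso; fin_cases a <;> simp_all
    · simp only [Sum.elim_inl, Sum.elim_inr] at hab
      exfalso; fin_cases b <;> simp_all
    · have : a = b := Fin.ext (by omega)
      rw [this]
  · rintro e ⟨a, b, hab, rfl⟩
    have himg : ∀ a b : Fin 5,
        (({Sum.inl a, Sum.inl b} : Finset (Fin 5 ⊕ Fin (3 - 2))) ∪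
          Finset.univ.image Sum.inr).image (Sum.elim ![x, y, z, s, t] fun _ => v) =
        {![x, y, z, s, t] a, ![x, y, z, s, t] b, v} := by
      intro a b
      rw [image_union, image_insert, image_singleton, image_image]
      have : (Sum.elim ![x, y, z, s, t] fun _ => v) ∘
          (Sum.inr : Fin (3 - 2) → Fin 5 ⊕ Fin (3 - 2)) = fun _ => v := rfl
      rw [this, Finset.image_const univ_nonempty]
      ext u
      simp only [mem_union, mem_insert, mem_singleton, Sum.elim_inl]
      tauto
    have hcases : (a = 0 ∧ b = 1) ∨ (a = 1 ∧ b = 0) ∨ (a = 1 ∧ b = 2) ∨ (a = 2 ∧ b = 1) ∨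
        (a = 3 ∧ b = 4) ∨ (a = 4 ∧ b = 3) := by
      rw [show P3K2 = SimpleGraph.fromRel
            fun x y => (x = 0 ∧ y = 1) ∨ (x = 1 ∧ y = 2) ∨ (x = 3 ∧ y = 4) from rfl,
        SimpleGraph.fromRel_adj] at hab
      revert hab
      fin_cases a <;> fin_cases b <;> decide
    have htri : ∀ p q r : Fin n, ({p, q, r} : Finset (Fin n)) = {r, p, q} := by
      intro p q r; ext u
      simp only [mem_insert, mem_singleton]; tauto
    rw [Finset.mem_coe]
    obtain ⟨rfl, rfl⟩ | ⟨rfl, rfl⟩ | ⟨rfl, rfl⟩ | ⟨rfl, rfl⟩ | ⟨rfl, rfl⟩ | ⟨rfl, rfl⟩ := hcases <;>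
      rw [himg] <;> simp only [Matrix.cons_val_zero, Matrix.cons_val_one, Matrix.head_cons,
        Matrix.cons_val_two, Matrix.tail_cons, Matrix.cons_val_three, Matrix.cons_val_four] <;>
      rw [htri]
    · exact h1
    · rw [pair_comm]; exact h1
    · exact h2
    · rw [pair_comm]; exact h2
    · exact h3
    · rw [pair_comm]; exact h3


lemma link_pair (hE3 : ∀ e ∈ E, e.card = 3) {v : Fin n} {s : Finset (Fin n)} {u : Fin n}
    (hs : s ∈ link E v) (hu : u ∈ s) : ∃ w, w ≠ u ∧ s = ({u, w} : Finset (Fin n)) := by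
  obtain ⟨p, q, hpq, rfl⟩ := card_eq_two.mp (link_card hE3 hs)
  simp only [mem_insert, mem_singleton] at hu
  rcases hu with rfl | rfl
  · exact ⟨q, hpq.symm, rfl⟩
  · exact ⟨p, hpq, pair_comm p u⟩

variable (hfree : ¬ HasCopy (↑E : Set (Finset (Fin n))) (suspEdges P3K2 3))
  (hE3 : ∀ e ∈ E, e.card = 3)

include hfree hE3 in
lemma linkF {v x y z s t : Fin n}
    (hxy : ({x, y} : Finset (Fin n)) ∈ link E v) (hyz : ({y, z} : Finset (Fin n)) ∈ link E v)
    (hst : ({s, t} : Finset (Fin n)) ∈ link E v) (hxz : x ≠ z)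
    (hsx : s ≠ x) (hsy : s ≠ y) (hsz : s ≠ z)
    (htx : t ≠ x) (hty : t ≠ y) (htz : t ≠ z) : False := by
  have h1 := pair_mem_link.mp hxy
  have h2 := pair_mem_link.mp hyz
  have h3 := pair_mem_link.mp hst
  exact forbidden hfree (pair_ne hE3 hxy) (pair_ne hE3 hyz) hxz (pair_ne hE3 hst)
    hsx hsy hsz htx hty htz h1.1 h1.2.1 h2.2.1 h3.1 h3.2.1 h1.2.2 h2.2.2 h3.2.2

include hfree hE3 in
lemma link_meets {v x y z : Fin n}
    (hxy : ({x, y} : Finset (Fin n)) ∈ link E v) (hyz : ({y, z} : Finset (Fin n)) ∈ link E v)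
    (hxz : x ≠ z) {e : Finset (Fin n)} (he : e ∈ link E v) :
    ∃ c ∈ e, c = x ∨ c = y ∨ c = z := by
  by_contra hc
  push_neg at hc
  obtain ⟨s, t, hst', rfl⟩ := card_eq_two.mp (link_card hE3 he)
  have hs := hc s (by simp)
  have ht := hc t (by simp)
  exact linkF hfree hE3 hxy hyz he hxz hs.1 hs.2.1 hs.2.2 ht.1 ht.2.1 ht.2.2

lemma card_le_four (a b c d : Fin n) : ({a, b, c, d} : Finset (Fin n)).card ≤ 4 := by
  have h1 : ({d} : Finset (Fin n)).card ≤ 1 := by simp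
  have h2 : ({c, d} : Finset (Fin n)).card ≤ 2 := le_trans (card_insert_le _ _) (by omega)
  have h3 : ({b, c, d} : Finset (Fin n)).card ≤ 3 := le_trans (card_insert_le _ _) (by omega)
  exact le_trans (card_insert_le _ _) (by omega)

lemma card_le_three (a b c : Fin n) : ({a, b, c} : Finset (Fin n)).card ≤ 4 := by
  have h1 : ({c} : Finset (Fin n)).card ≤ 1 := by simp
  have h2 : ({b, c} : Finset (Fin n)).card ≤ 2 := le_trans (card_insert_le _ _) (by omega)
  exact le_trans (card_insert_le _ _) (by omega)

include hfree hE3 in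
lemma support_lemma {v x y z a : Fin n}
    (hxy : ({x, y} : Finset (Fin n)) ∈ link E v) (hyz : ({y, z} : Finset (Fin n)) ∈ link E v)
    (hxz : x ≠ z) (hxa : ({x, a} : Finset (Fin n)) ∈ link E v) (hay : a ≠ y) :
    ∃ A : Finset (Fin n), A.card ≤ 4 ∧ ∀ s ∈ link E v, s ⊆ A := by
  have hxy' : x ≠ y := pair_ne hE3 hxy
  have hyz' : y ≠ z := pair_ne hE3 hyz
  have hxa' : x ≠ a := pair_ne hE3 hxa
  by_cases haz : a = z
  · -- a = z : edges xy, ya, xa all present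
    subst haz
    have hyx : ({y, x} : Finset (Fin n)) ∈ link E v := by rwa [pair_comm] at hxy
    have hay2 : ({a, y} : Finset (Fin n)) ∈ link E v := by rwa [pair_comm] at hyz
    have hax2 : ({a, x} : Finset (Fin n)) ∈ link E v := by rwa [pair_comm] at hxa
    have base : ∀ c d : Fin n, (c = x ∨ c = y ∨ c = a) → (d = x ∨ d = y ∨ d = a) → c ≠ d →
        ({c, d} : Finset (Fin n)) ∈ link E v := by
      rintro c d (rfl | rfl | rfl) (rfl | rfl | rfl) hcd <;>
        first | exact absurd rfl hcd | assumption
    have third : ∀ c c0 : Fin n, (c = x ∨ c = y ∨ c = a) → (c0 = x ∨ c0 = y ∨ c0 = a) →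
        c ≠ c0 → ∃ d, (d = x ∨ d = y ∨ d = a) ∧ d ≠ c ∧ d ≠ c0 := by
      rintro c c0 hc hc0 hcd
      rcases hc with rfl | rfl | rfl <;> rcases hc0 with rfl | rfl | rfl
      · exact absurd rfl hcd
      · exact ⟨a, Or.inr (Or.inr rfl), hxa'.symm, hyz'.symm⟩
      · exact ⟨y, Or.inr (Or.inl rfl), hxy'.symm, hyz'⟩
      · exact ⟨a, Or.inr (Or.inr rfl), hyz'.symm, hxa'.symm⟩
      · exact absurd rfl hcd
      · exact ⟨x, Or.inl rfl, hxy', hxa'⟩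
      · exact ⟨y, Or.inr (Or.inl rfl), hyz', hxy'.symm⟩
      · exact ⟨x, Or.inl rfl, hxa', hxy'⟩
      · exact absurd rfl hcd
    by_cases hout : ∀ s ∈ link E v, s ⊆ ({x, y, a} : Finset (Fin n))
    · exact ⟨{x, y, a}, card_le_three x y a, hout⟩
    · push_neg at hout
      obtain ⟨s0, hs0, hs0sub⟩ := hout
      obtain ⟨b, hbs0, hb⟩ := not_subset.mp hs0sub
      simp only [mem_insert, mem_singleton, not_or] at hb
      obtain ⟨hbx, hby, hba⟩ := hb
      obtain ⟨c0, hc0s0, hc0⟩ := link_meets hfree hE3 hxy hyz hxz hs0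
      have hnotb : ∀ d : Fin n, (d = x ∨ d = y ∨ d = a) → d ≠ b := by
        rintro d (rfl | rfl | rfl)
        exacts [Ne.symm hbx, Ne.symm hby, Ne.symm hba]
      obtain ⟨w0, hw0b, hs0eq⟩ := link_pair hE3 hs0 hbs0
      have hw0 : c0 = w0 := by
        rw [hs0eq] at hc0s0
        simp only [mem_insert, mem_singleton] at hc0s0
        rcases hc0s0 with rfl | rfl
        · exfalso
          rcases hc0 with rfl | rfl | rfl
          exacts [hbx rfl, hby rfl, hba rfl]
        · rfl
      rw [← hw0] at hs0eq
      rw [hs0eq] at hs0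
      have hs0' : ({c0, b} : Finset (Fin n)) ∈ link E v := by rwa [pair_comm] at hs0
      refine ⟨{b, x, y, a}, card_le_four b x y a, ?_⟩
      intro s hs u hus
      simp only [mem_insert, mem_singleton]
      by_contra hu
      push_neg at hu
      obtain ⟨hub, hux, huy, hua⟩ := hu
      have hnotu : ∀ d : Fin n, (d = x ∨ d = y ∨ d = a) → d ≠ u := by
        rintro d (rfl | rfl | rfl)
        exacts [Ne.symm hux, Ne.symm huy, Ne.symm hua]
      obtain ⟨c, hcs, hc⟩ := link_meets hfree hE3 hxy hyz hxz hs
      obtain ⟨w, hwu, hseq⟩ := link_pair hE3 hs hus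
      have hw : c = w := by
        rw [hseq] at hcs
        simp only [mem_insert, mem_singleton] at hcs
        rcases hcs with rfl | rfl
        · exfalso
          rcases hc with rfl | rfl | rfl
          exacts [hux rfl, huy rfl, hua rfl]
        · rfl
      rw [← hw] at hseq
      rw [hseq] at hs
      by_cases hcc0 : c = c0
      · rw [← hcc0] at hs0'
        rcases hc with rfl | rfl | rfl
        · exact linkF hfree hE3 hs hs0'
            (base y a (Or.inr (Or.inl rfl)) (Or.inr (Or.inr rfl)) hyz') hub
            (hnotu y (Or.inr (Or.inl rfl))) hxy'.symm (hnotb y (Or.inr (Or.inl rfl)))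
            (hnotu a (Or.inr (Or.inr rfl))) hxa'.symm (hnotb a (Or.inr (Or.inr rfl)))
        · exact linkF hfree hE3 hs hs0'
            (base x a (Or.inl rfl) (Or.inr (Or.inr rfl)) hxa') hub
            (hnotu x (Or.inl rfl)) hxy' (hnotb x (Or.inl rfl))
            (hnotu a (Or.inr (Or.inr rfl))) hyz'.symm (hnotb a (Or.inr (Or.inr rfl)))
        · exact linkF hfree hE3 hs hs0'
            (base x y (Or.inl rfl) (Or.inr (Or.inl rfl)) hxy') hub
            (hnotu x (Or.inl rfl)) hxa' (hnotb x (Or.inl rfl))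
            (hnotu y (Or.inr (Or.inl rfl))) hyz' (hnotb y (Or.inr (Or.inl rfl)))
      · obtain ⟨d, hdm, hdc, hdc0⟩ := third c c0 hc hc0 hcc0
        exact linkF hfree hE3 hs (base c d hc hdm (Ne.symm hdc)) hs0'
          ((hnotu d hdm).symm)
          (hnotu c0 hc0) (Ne.symm hcc0) (Ne.symm hdc0)
          (Ne.symm hub) (Ne.symm (hnotb c hc)) (Ne.symm (hnotb d hdm))
  · -- a ≠ z : support is {a, x, y, z}
    have hax : ({a, x} : Finset (Fin n)) ∈ link E v := by rwa [pair_comm] at hxa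
    refine ⟨{a, x, y, z}, card_le_four a x y z, ?_⟩
    intro s hs u hus
    simp only [mem_insert, mem_singleton]
    by_contra hu
    push_neg at hu
    obtain ⟨hua, hux, huy, huz⟩ := hu
    obtain ⟨c1, hc1s, hc1⟩ := link_meets hfree hE3 hxy hyz hxz hs
    obtain ⟨c2, hc2s, hc2⟩ := link_meets hfree hE3 hax hxy hay hs
    obtain ⟨w, hwu, hseq⟩ := link_pair hE3 hs hus
    have hw1 : c1 = w := by
      rw [hseq] at hc1s
      simp only [mem_insert, mem_singleton] at hc1s
      rcases hc1s with rfl | rfl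
      · exfalso
        rcases hc1 with rfl | rfl | rfl
        exacts [hux rfl, huy rfl, huz rfl]
      · rfl
    have hw2 : c2 = w := by
      rw [hseq] at hc2s
      simp only [mem_insert, mem_singleton] at hc2s
      rcases hc2s with rfl | rfl
      · exfalso
        rcases hc2 with rfl | rfl | rfl
        exacts [hua rfl, hux rfl, huy rfl]
      · rfl
    rw [← hw1] at hseq
    rw [hseq] at hs
    have hcxy : c1 = x ∨ c1 = y := by
      rw [hw1, ← hw2] at hc1 ⊢
      rcases hc1 with rfl | rfl | rfl
      · left; rfl
      · right; rfl
      · exfalso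
        rcases hc2 with h | h | h
        · exact haz h.symm
        · exact hxz h.symm
        · exact hyz' h.symm
    rcases hcxy with rfl | rfl
    · exact linkF hfree hE3 hs hxa hyz hua
        (Ne.symm huy) hxy'.symm hay.symm (Ne.symm huz) hxz.symm (fun h => haz h.symm)
    · exact linkF hfree hE3 hs hyz hxa huz
        (Ne.symm hux) hxy' hxz (Ne.symm hua) hay haz

include hfree hE3 in
lemma trichotomy (v : Fin n) :
    (∀ s ∈ link E v, ∀ t ∈ link E v, s ≠ t → Disjoint s t)
    ∨ (∃ u, ∀ s ∈ link E v, u ∈ s)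
    ∨ (∃ A : Finset (Fin n), A.card ≤ 4 ∧ ∀ s ∈ link E v, s ⊆ A) := by
  by_cases hM : ∀ s ∈ link E v, ∀ t ∈ link E v, s ≠ t → Disjoint s t
  · exact Or.inl hM
  right
  push_neg at hM
  obtain ⟨s1, hs1, s2, hs2, hne, hnd⟩ := hM
  obtain ⟨y, hy1, hy2⟩ := not_disjoint_iff.mp hnd
  obtain ⟨x, hxy', hs1eq⟩ := link_pair hE3 hs1 hy1
  obtain ⟨z, hzy', hs2eq⟩ := link_pair hE3 hs2 hy2
  rw [hs1eq] at hs1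
  rw [hs2eq] at hs2
  have hxy : ({x, y} : Finset (Fin n)) ∈ link E v := by rwa [pair_comm] at hs1
  have hyz : ({y, z} : Finset (Fin n)) ∈ link E v := hs2
  have hxz : x ≠ z := by
    rintro rfl
    exact hne (hs1eq.trans hs2eq.symm)
  by_cases hStar : ∀ s ∈ link E v, y ∈ s
  · exact Or.inl ⟨y, hStar⟩
  right
  push_neg at hStar
  obtain ⟨e3, he3, hye3⟩ := hStar
  obtain ⟨c, hce3, hc⟩ := link_meets hfree hE3 hxy hyz hxz he3
  obtain ⟨a, hac, he3eq⟩ := link_pair hE3 he3 hce3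
  have hay : a ≠ y := by
    rintro rfl
    rw [he3eq] at hye3
    exact hye3 (by simp)
  rw [he3eq] at he3
  rcases hc with rfl | rfl | rfl
  · exact support_lemma hfree hE3 hxy hyz hxz he3 hay
  · exact absurd hce3 hye3
  · have hzy : ({c, y} : Finset (Fin n)) ∈ link E v := by rwa [pair_comm] at hyz
    have hyx : ({y, x} : Finset (Fin n)) ∈ link E v := by rwa [pair_comm] at hxy
    exact support_lemma hfree hE3 hzy hyx hxz.symm he3 hay

lemma eq_pair {s : Finset (Fin n)} (h2 : s.card = 2) {p q : Fin n}
    (hp : p ∈ s) (hq : q ∈ s) (hpq : p ≠ q) : s = ({p, q} : Finset (Fin n)) := by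
  have hsub : ({p, q} : Finset (Fin n)) ⊆ s := by
    intro r hr
    simp only [mem_insert, mem_singleton] at hr
    rcases hr with rfl | rfl <;> assumption
  have hcard : s.card ≤ ({p, q} : Finset (Fin n)).card := by
    rw [card_insert_of_notMem (by simpa using hpq), card_singleton, h2]
  exact (eq_of_subset_of_card_le hsub hcard).symm

lemma matching_bound (hE3 : ∀ e ∈ E, e.card = 3) {v : Fin n}
    (hM : ∀ s ∈ link E v, ∀ t ∈ link E v, s ≠ t → Disjoint s t) :
    2 * (link E v).card + 1 ≤ n := by
  have h1 : ((link E v).biUnion id).card = ∑ s ∈ link E v, s.card := card_biUnion hM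
  have h2 : ∑ s ∈ link E v, s.card = 2 * (link E v).card := by
    rw [Finset.sum_congr rfl (fun s hs => link_card hE3 hs), Finset.sum_const, smul_eq_mul,
      mul_comm]
  have h3 : (link E v).biUnion id ⊆ univ.erase v := by
    intro u hu
    simp only [mem_biUnion, id] at hu
    obtain ⟨s, hs, hus⟩ := hu
    have hv := (mem_link.mp hs).1
    exact mem_erase.mpr ⟨fun h => hv (h ▸ hus), mem_univ u⟩
  have h4 := card_le_card h3
  have h5 : (univ.erase v).card = n - 1 := by
    rw [card_erase_of_mem (mem_univ v), card_univ, Fintype.card_fin]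
  have hn : 1 ≤ n := Fin.pos v
  omega

lemma small_bound (hE3 : ∀ e ∈ E, e.card = 3) {v : Fin n} {A : Finset (Fin n)}
    (hA : A.card ≤ 4) (hsub : ∀ s ∈ link E v, s ⊆ A) : (link E v).card ≤ 6 := by
  have h1 : link E v ⊆ A.powersetCard 2 := fun s hs =>
    mem_powersetCard.mpr ⟨hsub s hs, link_card hE3 hs⟩
  have h2 := card_le_card h1
  rw [card_powersetCard] at h2
  exact le_trans h2 (le_trans (Nat.choose_le_choose 2 hA) (by decide))

def Sset (E : Finset (Finset (Fin n))) : Finset (Fin n) :=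
  univ.filter fun v => 7 ≤ (E.filter fun e => v ∈ e).card ∧ ∃ u, ∀ s ∈ link E v, u ∈ s

noncomputable def cen (E : Finset (Finset (Fin n))) (v : Fin n) : Fin n :=
  if h : ∃ u, ∀ s ∈ link E v, u ∈ s then h.choose else v

lemma mem_Sset {v : Fin n} : v ∈ Sset E ↔
    7 ≤ (E.filter fun e => v ∈ e).card ∧ ∃ u, ∀ s ∈ link E v, u ∈ s := by
  simp [Sset]

lemma Sset_deg {v : Fin n} (hv : v ∈ Sset E) : 7 ≤ (E.filter fun e => v ∈ e).card :=
  (mem_Sset.mp hv).1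

lemma cen_spec {v : Fin n} (hv : v ∈ Sset E) : ∀ s ∈ link E v, cen E v ∈ s := by
  have h := (mem_Sset.mp hv).2
  rw [cen, dif_pos h]
  exact h.choose_spec

lemma cen_mem {v : Fin n} (hv : v ∈ Sset E) {e : Finset (Fin n)} (he : e ∈ E) (hve : v ∈ e) :
    cen E v ∈ e := by
  have hs : e.erase v ∈ link E v :=
    mem_link.mpr ⟨notMem_erase _ _, by rwa [insert_erase hve]⟩
  exact (erase_subset _ _) (cen_spec hv _ hs)

lemma cen_ne {v : Fin n} (hv : v ∈ Sset E) : cen E v ≠ v := by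
  have h7 := Sset_deg hv
  obtain ⟨e, he⟩ := card_pos.mp (show 0 < (E.filter fun e => v ∈ e).card by omega)
  rw [mem_filter] at he
  have hs : e.erase v ∈ link E v :=
    mem_link.mpr ⟨notMem_erase _ _, by rw [insert_erase he.2]; exact he.1⟩
  have hc := cen_spec hv _ hs
  intro h
  rw [h] at hc
  exact notMem_erase v e hc

include hfree hE3 in
lemma cen_invol {v : Fin n} (hv : v ∈ Sset E) :
    cen E v ∈ Sset E ∧ cen E (cen E v) = v := by
  have h7 : 7 ≤ (E.filter fun e => v ∈ e).card := Sset_deg hv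
  have hvu : cen E v ≠ v := cen_ne hv
  set u := cen E v with hu
  have hsub : (E.filter fun e => v ∈ e) ⊆ (E.filter fun e => u ∈ e) := by
    intro e he
    rw [mem_filter] at he ⊢
    exact ⟨he.1, cen_mem hv he.1 he.2⟩
  have h7u : 7 ≤ (E.filter fun e => u ∈ e).card := le_trans h7 (card_le_card hsub)
  have hL'card : 7 ≤ ((link E u).filter fun s => v ∈ s).card := by
    apply le_trans h7
    apply card_le_card_of_injOn (fun e => e.erase u)
    · intro e he
      rw [mem_coe, mem_filter] at he
      have hue : u ∈ e := cen_mem hv he.1 he.2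
      rw [mem_coe, mem_filter]
      refine ⟨mem_link.mpr ⟨notMem_erase _ _, by rw [insert_erase hue]; exact he.1⟩, ?_⟩
      exact mem_erase.mpr ⟨Ne.symm hvu, he.2⟩
    · intro e he e' he' h
      rw [mem_coe, mem_filter] at he he'
      have hue : u ∈ e := cen_mem hv he.1 he.2
      have hue' : u ∈ e' := cen_mem hv he'.1 he'.2
      simp only at h
      rw [← insert_erase hue, h, insert_erase hue']
  have hkey : ∀ s ∈ link E u, v ∈ s := by
    rcases trichotomy hfree hE3 u with hM | ⟨u', hu'⟩ | ⟨A, hA, hAs⟩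
    · exfalso
      obtain ⟨s1, hs1, s2, hs2, h12⟩ := one_lt_card.mp
        (show 1 < ((link E u).filter fun s => v ∈ s).card by omega)
      rw [mem_filter] at hs1 hs2
      exact disjoint_left.mp (hM s1 hs1.1 s2 hs2.1 h12) hs1.2 hs2.2
    · by_cases huv' : u' = v
      · subst huv'; exact hu'
      · exfalso
        obtain ⟨s1, hs1, s2, hs2, h12⟩ := one_lt_card.mp
          (show 1 < ((link E u).filter fun s => v ∈ s).card by omega)
        rw [mem_filter] at hs1 hs2
        have e1 : s1 = ({v, u'} : Finset (Fin n)) :=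
          eq_pair (link_card hE3 hs1.1) hs1.2 (hu' s1 hs1.1) (Ne.symm huv')
        have e2 : s2 = ({v, u'} : Finset (Fin n)) :=
          eq_pair (link_card hE3 hs2.1) hs2.2 (hu' s2 hs2.1) (Ne.symm huv')
        exact h12 (e1.trans e2.symm)
    · exfalso
      have hmap : ((link E u).filter fun s => v ∈ s).card ≤ (A.powersetCard 1).card := by
        apply card_le_card_of_injOn (fun s => s.erase v)
        · intro s hs
          rw [mem_coe, mem_filter] at hs
          refine mem_powersetCard.mpr ⟨subset_trans (erase_subset _ _) (hAs s hs.1), ?_⟩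
          rw [card_erase_of_mem hs.2, link_card hE3 hs.1]
        · intro s hs s' hs' h
          rw [mem_coe, mem_filter] at hs hs'
          simp only at h
          rw [← insert_erase hs.2, h, insert_erase hs'.2]
      rw [card_powersetCard, Nat.choose_one_right] at hmap
      omega
  have huS : u ∈ Sset E := mem_Sset.mpr ⟨h7u, ⟨v, hkey⟩⟩
  refine ⟨huS, ?_⟩
  by_contra hne
  have hcu := cen_spec huS
  have hcard : (link E u).card ≤ 1 := by
    apply card_le_one.mpr
    intro s1 hs1 s2 hs2
    have e1 : s1 = ({v, cen E u} : Finset (Fin n)) :=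
      eq_pair (link_card hE3 hs1) (hkey s1 hs1) (hcu s1 hs1) (fun h => hne h.symm)
    have e2 : s2 = ({v, cen E u} : Finset (Fin n)) :=
      eq_pair (link_card hE3 hs2) (hkey s2 hs2) (hcu s2 hs2) (fun h => hne h.symm)
    exact e1.trans e2.symm
  have hle := link_card_eq (E := E) (v := u)
  omega

lemma eq_tri {e : Finset (Fin n)} (h3 : e.card = 3) {p q r : Fin n}
    (hp : p ∈ e) (hq : q ∈ e) (hr : r ∈ e) (hpq : p ≠ q) (hpr : p ≠ r) (hqr : q ≠ r) :
    e = ({p, q, r} : Finset (Fin n)) := by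
  have hsub : ({p, q, r} : Finset (Fin n)) ⊆ e := by
    intro u hu
    simp only [mem_insert, mem_singleton] at hu
    rcases hu with rfl | rfl | rfl <;> assumption
  have hcard : e.card ≤ ({p, q, r} : Finset (Fin n)).card := by
    rw [card_insert_of_notMem (by simp [hpq, hpr]), card_insert_of_notMem (by simp [hqr]),
      card_singleton, h3]
  exact (eq_of_subset_of_card_le hsub hcard).symm

include hfree hE3 in
lemma triple_structure {e : Finset (Fin n)} (he : e ∈ E) {v : Fin n} (hv : v ∈ Sset E)
    (hve : v ∈ e) :
    ∃ w, w ∉ Sset E ∧ w ≠ v ∧ w ≠ cen E v ∧ e = ({v, cen E v, w} : Finset (Fin n)) := by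
  have hce : cen E v ∈ e := cen_mem hv he hve
  have hcv : cen E v ≠ v := cen_ne hv
  have hcard := hE3 e he
  have hex : ∃ w ∈ e, w ≠ v ∧ w ≠ cen E v := by
    by_contra hc
    push_neg at hc
    have hsub : e ⊆ ({v, cen E v} : Finset (Fin n)) := by
      intro u hu
      simp only [mem_insert, mem_singleton]
      by_contra hu2
      push_neg at hu2
      exact hu2.2 (hc u hu hu2.1)
    have h2 := card_le_card hsub
    have : ({v, cen E v} : Finset (Fin n)).card ≤ 2 := le_trans (card_insert_le _ _) (by simp)
    omega
  obtain ⟨w, hwe, hwv, hwc⟩ := hex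
  have heq : e = ({v, cen E v, w} : Finset (Fin n)) :=
    eq_tri hcard hve hce hwe hcv.symm (Ne.symm hwv) (Ne.symm hwc)
  refine ⟨w, ?_, hwv, hwc, heq⟩
  intro hwS
  have hcw : cen E w ∈ e := cen_mem hwS he hwe
  have hcwne : cen E w ≠ w := cen_ne hwS
  rw [heq] at hcw
  simp only [mem_insert, mem_singleton] at hcw
  rcases hcw with h | h | h
  · exact hwc (by rw [← (cen_invol hfree hE3 hwS).2, h])
  · have := (cen_invol hfree hE3 hwS).2
    rw [h, (cen_invol hfree hE3 hv).2] at this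
    exact hwv this.symm
  · exact hcwne h

include hfree hE3 in
lemma triple_unique {e e' : Finset (Fin n)} (he : e ∈ E) (he' : e' ∈ E) {u w : Fin n}
    (huS : u ∈ Sset E) (hue : u ∈ e) (hue' : u ∈ e') (hwe : w ∈ e) (hwe' : w ∈ e')
    (hwu : w ≠ u) (hwc : w ≠ cen E u) : e = e' := by
  have hcu : cen E u ≠ u := cen_ne huS
  have h1 : e = ({u, cen E u, w} : Finset (Fin n)) :=
    eq_tri (hE3 e he) hue (cen_mem huS he hue) hwe hcu.symm (Ne.symm hwu) (Ne.symm hwc)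
  have h2 : e' = ({u, cen E u, w} : Finset (Fin n)) :=
    eq_tri (hE3 e' he') hue' (cen_mem huS he' hue') hwe' hcu.symm (Ne.symm hwu) (Ne.symm hwc)
  rw [h1, h2]

include hfree hE3 in
lemma a_bound {w : Fin n} (hw : w ∉ Sset E)
    [DecidablePred fun e : Finset (Fin n) => ∃ v ∈ Sset E, v ∈ e] :
    2 * ((E.filter fun e => w ∈ e).filter fun e => ∃ v ∈ Sset E, v ∈ e).card ≤
      (Sset E).card := by
  set F := (E.filter fun e => w ∈ e).filter (fun e => ∃ v ∈ Sset E, v ∈ e) with hF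
  have hFe : ∀ e ∈ F, e ∈ E ∧ w ∈ e ∧ ∃ v ∈ Sset E, v ∈ e := by
    intro e he
    rw [hF, mem_filter, mem_filter] at he
    tauto
  have herase : ∀ e ∈ F, e.erase w ⊆ Sset E := by
    intro e heF
    obtain ⟨heE, hwe, v0, hv0S, hv0e⟩ := hFe e heF
    obtain ⟨w', hw'S, hw'v, hw'c, heq⟩ := triple_structure hfree hE3 heE hv0S hv0e
    intro u hu
    have hune := mem_erase.mp hu
    have hue : u ∈ e := hune.2
    rw [heq] at hue
    simp only [mem_insert, mem_singleton] at hue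
    rcases hue with rfl | rfl | rfl
    · exact hv0S
    · exact (cen_invol hfree hE3 hv0S).1
    · exfalso
      have hwe' := hwe
      rw [heq] at hwe'
      simp only [mem_insert, mem_singleton] at hwe'
      rcases hwe' with rfl | rfl | rfl
      · exact hw hv0S
      · exact hw ((cen_invol hfree hE3 hv0S).1)
      · exact hune.1 rfl
  have hdisj : ∀ e ∈ F, ∀ e' ∈ F, e ≠ e' → Disjoint (e.erase w) (e'.erase w) := by
    intro e heF e' he'F hne
    rw [disjoint_left]
    intro u hu hu'
    have huS : u ∈ Sset E := herase e heF hu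
    have hue : u ∈ e := mem_of_mem_erase hu
    have hue' : u ∈ e' := mem_of_mem_erase hu'
    obtain ⟨heE, hwe, -⟩ := hFe e heF
    obtain ⟨he'E, hwe', -⟩ := hFe e' he'F
    have hwu : w ≠ u := fun h => hw (h ▸ huS)
    have hwc : w ≠ cen E u := fun h => hw (h ▸ (cen_invol hfree hE3 huS).1)
    exact hne (triple_unique hfree hE3 heE he'E huS hue hue' hwe hwe' hwu hwc)
  have hcardB : (F.biUnion fun e => e.erase w).card = ∑ e ∈ F, (e.erase w).card :=
    card_biUnion hdisj
  have hsum : ∑ e ∈ F, (e.erase w).card = 2 * F.card := by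
    rw [Finset.sum_congr rfl (fun e he => ?_), Finset.sum_const, smul_eq_mul, mul_comm]
    obtain ⟨heE, hwe, -⟩ := hFe e he
    rw [card_erase_of_mem hwe, hE3 e heE]
  have hsubS : (F.biUnion fun e => e.erase w) ⊆ Sset E := by
    rw [biUnion_subset]
    exact herase
  have hle := card_le_card hsubS
  omega

include hfree hE3 in
lemma inter_T_card {e : Finset (Fin n)} (heE : e ∈ E) (hmeet : ∃ v ∈ Sset E, v ∈ e) :
    (e ∩ (Sset E)ᶜ).card = 1 := by
  obtain ⟨v0, hv0S, hv0e⟩ := hmeet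
  obtain ⟨w', hw'S, hw'v, hw'c, heq⟩ := triple_structure hfree hE3 heE hv0S hv0e
  have hset : e ∩ (Sset E)ᶜ = {w'} := by
    ext u
    simp only [mem_inter, mem_compl, mem_singleton]
    constructor
    · rintro ⟨hue, huS⟩
      rw [heq] at hue
      simp only [mem_insert, mem_singleton] at hue
      rcases hue with rfl | rfl | rfl
      · exact absurd hv0S huS
      · exact absurd ((cen_invol hfree hE3 hv0S).1) huS
      · rfl
    · rintro rfl
      exact ⟨by rw [heq]; simp, hw'S⟩
  rw [hset, card_singleton]

lemma double_count (F : Finset (Finset (Fin n))) (T : Finset (Fin n)) :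
    ∑ w ∈ T, (F.filter fun e => w ∈ e).card = ∑ e ∈ F, (e ∩ T).card := by
  have h2 : ∀ e : Finset (Fin n), (e ∩ T).card = ∑ w ∈ T, if w ∈ e then 1 else 0 := by
    intro e
    rw [← card_filter]
    congr 1
    rw [filter_mem_eq_inter, inter_comm]
  simp_rw [card_filter, h2]
  exact Finset.sum_comm

include hfree hE3 in
lemma main_count (hn : 13 ≤ n) :
    6 * E.card ≤ ((Sset E)ᶜ : Finset (Fin n)).card * (n - 1 + 2 * (Sset E).card) := by
  classical
  set S := Sset E with hS
  set T : Finset (Fin n) := Sᶜ with hT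
  set pS : Finset (Fin n) → Prop := fun e => ∃ v ∈ S, v ∈ e with hpS
  set ES := E.filter pS with hES
  set ET := E.filter (fun e => ¬ pS e) with hET
  have hsplit : ES.card + ET.card = E.card := card_filter_add_card_filter_not _
  have hK1 : ∑ w ∈ T, (ES.filter fun e => w ∈ e).card = ES.card := by
    rw [double_count]
    rw [Finset.sum_congr rfl (fun e he => ?_), Finset.sum_const, smul_eq_mul, mul_one]
    rw [hES, mem_filter] at he
    exact inter_T_card hfree hE3 he.1 he.2
  have hK2 : ∑ w ∈ T, (ET.filter fun e => w ∈ e).card = 3 * ET.card := by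
    rw [double_count]
    rw [Finset.sum_congr rfl (fun e he => ?_), Finset.sum_const, smul_eq_mul, mul_comm]
    rw [hET, mem_filter] at he
    have hinter : e ∩ T = e := by
      ext u
      simp only [mem_inter, hT, mem_compl]
      constructor
      · exact fun h => h.1
      · intro hu
        refine ⟨hu, fun huS => ?_⟩
        exact he.2 ⟨u, huS, hu⟩
    rw [hinter]
    exact hE3 e he.1
  have hper : ∀ w ∈ T, 6 * (ES.filter fun e => w ∈ e).card +
      2 * (ET.filter fun e => w ∈ e).card ≤ (n - 1) + 2 * S.card := by
    intro w hwT
    have hw : w ∉ S := by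
      rw [hT, mem_compl] at hwT
      exact hwT
    have hfilter1 : ES.filter (fun e => w ∈ e) = (E.filter fun e => w ∈ e).filter pS := by
      rw [hES, filter_filter, filter_filter]
      exact filter_congr (fun e _ => by tauto)
    have hfilter2 : ET.filter (fun e => w ∈ e) =
        (E.filter fun e => w ∈ e).filter (fun e => ¬ pS e) := by
      rw [hET, filter_filter, filter_filter]
      exact filter_congr (fun e _ => by tauto)
    have hab : (ES.filter fun e => w ∈ e).card + (ET.filter fun e => w ∈ e).card =
        (E.filter fun e => w ∈ e).card := by
      rw [hfilter1, hfilter2]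
      exact card_filter_add_card_filter_not _
    have hdeg : 2 * (E.filter fun e => w ∈ e).card + 1 ≤ n := by
      rcases trichotomy hfree hE3 w with hM | ⟨u, hu⟩ | ⟨A, hA, hAs⟩
      · have := matching_bound hE3 hM
        rwa [link_card_eq] at this
      · have hnotS : ¬ (7 ≤ (E.filter fun e => w ∈ e).card ∧
            ∃ u, ∀ s ∈ link E w, u ∈ s) := fun h => hw (mem_Sset.mpr h)
        have : (E.filter fun e => w ∈ e).card ≤ 6 := by
          by_contra hgt
          exact hnotS ⟨by omega, ⟨u, hu⟩⟩
        omega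
      · have := small_bound hE3 hA hAs
        rw [link_card_eq] at this
        omega
    have ha : 2 * (ES.filter fun e => w ∈ e).card ≤ S.card := by
      rw [hfilter1]
      exact a_bound hfree hE3 hw
    omega
  have hsum : ∑ w ∈ T, (6 * (ES.filter fun e => w ∈ e).card +
      2 * (ET.filter fun e => w ∈ e).card) ≤ T.card * ((n - 1) + 2 * S.card) := by
    rw [← smul_eq_mul, ← Finset.sum_const]
    exact Finset.sum_le_sum hper
  rw [Finset.sum_add_distrib, ← Finset.mul_sum, ← Finset.mul_sum, hK1, hK2] at hsum
  omega


end Stmt10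

/-- for `n > 33`, every `n`-vertex 3-uniform `S³(P₃ ∪ K₂)`-free hypergraph has
at most `3n²/16 - n/8 + 1/48` hyperedges. -/
theorem stmt10 (n : ℕ) (hn : 33 < n) (E : Finset (Finset (Fin n)))
    (h3 : ∀ e ∈ E, e.card = 3)
    (hfree : ¬ HasCopy (↑E : Set (Finset (Fin n))) (suspEdges P3K2 3)) :
    (E.card : ℝ) ≤ 3 / 16 * (n : ℝ) ^ 2 - (n : ℝ) / 8 + 1 / 48 := by
  classical
  have hmain := Stmt10.main_count hfree h3 (by omega)
  set σ := (Stmt10.Sset E).card with hσ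
  have hcompl : ((Stmt10.Sset E)ᶜ : Finset (Fin n)).card = n - σ := by
    rw [Finset.card_compl, Fintype.card_fin]
  have hσn : σ ≤ n := by
    rw [hσ]
    exact le_trans (Finset.card_le_univ _) (le_of_eq (Fintype.card_fin n))
  rw [hcompl] at hmain
  have hn1 : 1 ≤ n := by omega
  have hreal : (6 : ℝ) * E.card ≤ ((n : ℝ) - σ) * ((n : ℝ) - 1 + 2 * σ) := by
    have hc := (Nat.cast_le (α := ℝ)).mpr hmain
    push_cast [Nat.cast_sub hσn, Nat.cast_sub hn1] at hc
    convert hc using 2 <;> ring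
  nlinarith [sq_nonneg (2 * ((n : ℝ) - σ) - ((n : ℝ) - 1 + 2 * σ)), sq_nonneg ((n : ℝ) - σ),
    hreal]
end

section
/- Suppose there exists an $(n, r+t-2, r-1, 1)$-design, i.e., an $n$-vertex $(r+t-2)$-uniform hypergraph in which every $(r-1)$-set of vertices lies in exactly one hyperedge. Let $\mathcal{H}$ be the $r$-uniform hypergraph whose hyperedges are all $r$-subsets of the hyperedges of the design. Then for every $(r-2)$-set $S$ of vertices, the link graph of $S$ in $\mathcal{H}$ is a vertex-disjoint union of cliques each with $t$ vertices (in particular, for any tree $T$ with $t$ edges, $\mathcal{H}$ is $\mathcal{S}^r T$-free), and the number of hyperedges of $\mathcal{H}$ equals the number of design blocks times $\binom{r+t-2}{r}$, which equals $\frac{t-1}{r}\binom{n}{r-1}$. -/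
open Finset

section Aux15
variable {n r t : ℕ}

lemma aux15_block_eq (D : Finset (Finset (Fin n)))
    (hDdesign : ∀ C : Finset (Fin n), C.card = r - 1 → ∃! b, b ∈ D ∧ C ⊆ b)
    {C b₁ b₂ : Finset (Fin n)} (hC : C.card = r - 1)
    (h₁ : b₁ ∈ D) (h₂ : b₂ ∈ D) (s₁ : C ⊆ b₁) (s₂ : C ⊆ b₂) : b₁ = b₂ :=
  (hDdesign C hC).unique ⟨h₁, s₁⟩ ⟨h₂, s₂⟩

lemma aux15_card_union (hr : 3 ≤ r) {S : Finset (Fin n)} (hS : S.card = r - 2)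
    {u v : Fin n} (hu : u ∉ S) (hv : v ∉ S) (huv : u ≠ v) :
    (S ∪ {u, v}).card = r := by
  have h1 : S ∪ {u, v} = insert u (insert v S) := by
    ext x; simp
  rw [h1, Finset.card_insert_of_notMem (by simp [hu, huv]),
    Finset.card_insert_of_notMem hv, hS]
  omega

end Aux15

/-- from an `(n, r+t-2, r-1, 1)`-design, taking all `r`-subsets of the blocks
gives a hypergraph in which the link graph of every `(r-2)`-set is a disjoint union of
`K_t`'s (so it is `S^r T`-free for every tree `T` with `t` edges), with
`|E| = |D| ⬝ C(r+t-2, r)` and `r|E| = (t-1) C(n, r-1)`. -/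
theorem stmt15 (n r t : ℕ) (hr : 3 ≤ r) (ht : 1 ≤ t)
    (D : Finset (Finset (Fin n)))
    (hDcard : ∀ b ∈ D, b.card = r + t - 2)
    (hDdesign : ∀ C : Finset (Fin n), C.card = r - 1 → ∃! b, b ∈ D ∧ C ⊆ b) :
    let E : Finset (Finset (Fin n)) := D.biUnion fun b => Finset.powersetCard r b
    (∀ S : Finset (Fin n), S.card = r - 2 →
        (∀ u v w, (linkGraph (↑E) S).Adj u v → (linkGraph (↑E) S).Adj v w → u ≠ w →
          (linkGraph (↑E) S).Adj u w) ∧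
        (∀ u v, (linkGraph (↑E) S).Adj u v →
          ((linkGraph (↑E) S).neighborSet u).ncard = t - 1)) ∧
    (∀ (β : Type) [DecidableEq β] (T : SimpleGraph β), T.IsTree → T.edgeSet.ncard = t →
        ¬ HasCopy (↑E : Set (Finset (Fin n))) (suspEdges T r)) ∧
    E.card = D.card * (r + t - 2).choose r ∧
    r * E.card = (t - 1) * n.choose (r - 1) := by
  classical
  intro E
  have hmemE : ∀ e : Finset (Fin n), e ∈ E ↔ ∃ b ∈ D, e ⊆ b ∧ e.card = r := by
    intro e
    simp only [E, Finset.mem_biUnion, Finset.mem_powersetCard]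
  -- part 1
  have part1 : ∀ S : Finset (Fin n), S.card = r - 2 →
      (∀ u v w, (linkGraph (↑E) S).Adj u v → (linkGraph (↑E) S).Adj v w → u ≠ w →
        (linkGraph (↑E) S).Adj u w) ∧
      (∀ u v, (linkGraph (↑E) S).Adj u v →
        ((linkGraph (↑E) S).neighborSet u).ncard = t - 1) := by
    intro S hS
    -- basic cardinality fact
    have hcard1 : ∀ u : {v : Fin n // v ∉ S}, (insert (u : Fin n) S).card = r - 1 := by
      intro u
      rw [Finset.card_insert_of_notMem u.2, hS]; omega
    have hsub1 : ∀ u v : {v : Fin n // v ∉ S},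
        insert (u : Fin n) S ⊆ S ∪ {(u : Fin n), (v : Fin n)} := by
      intro u v x hx
      rcases Finset.mem_insert.mp hx with h | h
      · simp [h]
      · simp [h]
    have hsub1' : ∀ u v : {v : Fin n // v ∉ S},
        insert (v : Fin n) S ⊆ S ∪ {(u : Fin n), (v : Fin n)} := by
      intro u v x hx
      rcases Finset.mem_insert.mp hx with h | h
      · simp [h]
      · simp [h]
    constructor
    · rintro u v w ⟨huv, hedge1⟩ ⟨hvw, hedge2⟩ hne
      obtain ⟨b, hbD, hbsub, -⟩ := (hmemE _).mp hedge1
      obtain ⟨b', hbD', hbsub', -⟩ := (hmemE _).mp hedge2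
      have hbb : b = b' := aux15_block_eq D hDdesign (hcard1 v) hbD hbD'
        (Finset.Subset.trans (hsub1' u v) hbsub) (Finset.Subset.trans (hsub1 v w) hbsub')
      refine ⟨hne, (hmemE _).mpr ⟨b, hbD, ?_, aux15_card_union hr hS u.2 w.2
        (fun h => hne (Subtype.ext h))⟩⟩
      intro x hx
      rcases Finset.mem_union.mp hx with h | h
      · exact hbsub (by simp [h])
      · rcases Finset.mem_insert.mp h with h | h
        · exact hbsub (by simp [h])
        · rw [hbb]; exact hbsub' (by simp [Finset.mem_singleton.mp h])
    · rintro u v ⟨huv, hedge⟩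
      obtain ⟨b, hbD, hbsub, -⟩ := (hmemE _).mp hedge
      have hub : insert (u : Fin n) S ⊆ b := Finset.Subset.trans (hsub1 u v) hbsub
      have himg : Subtype.val '' ((linkGraph (↑E) S).neighborSet u)
          = ↑(b \ insert (u : Fin n) S) := by
        ext x
        simp only [Set.mem_image, SimpleGraph.mem_neighborSet, Finset.coe_sdiff,
          Set.mem_diff, Finset.mem_coe, Finset.mem_insert, not_or]
        constructor
        · rintro ⟨w, ⟨huw, he⟩, rfl⟩
          obtain ⟨b', hbD', hbsub', -⟩ := (hmemE _).mp he
          have hbb : b = b' := aux15_block_eq D hDdesign (hcard1 u) hbD hbD' hub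
            (Finset.Subset.trans (hsub1 u w) hbsub')
          refine ⟨?_, fun h => huw (Subtype.ext h.symm), w.2⟩
          rw [hbb]; exact hbsub' (by simp)
        · rintro ⟨hxb, hxu, hxS⟩
          refine ⟨⟨x, hxS⟩, ⟨fun h => hxu (congrArg Subtype.val h).symm, ?_⟩, rfl⟩
          refine (hmemE _).mpr ⟨b, hbD, ?_, aux15_card_union hr hS u.2 hxS
            (fun h => hxu h.symm)⟩
          intro y hy
          rcases Finset.mem_union.mp hy with h | h
          · exact hub (by simp [h])
          · rcases Finset.mem_insert.mp h with h | h
            · exact hub (by simp [h])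
            · rw [Finset.mem_singleton.mp h]; exact hxb
      have := Set.ncard_image_of_injective ((linkGraph (↑E) S).neighborSet u)
        (Subtype.val_injective)
      rw [himg, Set.ncard_coe_finset] at this
      rw [← this, Finset.card_sdiff_of_subset hub, hcard1 u, hDcard b hbD]
      omega
  -- disjointness of powersetCard families
  have hdisj : ∀ k, r - 1 ≤ k → ∀ b₁ ∈ D, ∀ b₂ ∈ D, b₁ ≠ b₂ →
      Disjoint (Finset.powersetCard k b₁) (Finset.powersetCard k b₂) := by
    intro k hk b₁ h₁ b₂ h₂ hne
    rw [Finset.disjoint_left]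
    intro e he1 he2
    rw [Finset.mem_powersetCard] at he1 he2
    obtain ⟨C, hCe, hCcard⟩ := Finset.exists_subset_card_eq
      (show r - 1 ≤ e.card by omega)
    exact hne (aux15_block_eq D hDdesign hCcard h₁ h₂ (hCe.trans he1.1) (hCe.trans he2.1))
  have hEcard : E.card = D.card * (r + t - 2).choose r := by
    rw [Finset.card_biUnion (hdisj r (by omega))]
    rw [Finset.sum_congr rfl (fun b hb => by
      rw [Finset.card_powersetCard, hDcard b hb]), Finset.sum_const, smul_eq_mul]
  have hcover : (Finset.univ : Finset (Fin n)).powersetCard (r - 1)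
      = D.biUnion (fun b => b.powersetCard (r - 1)) := by
    ext C
    simp only [Finset.mem_powersetCard, Finset.mem_biUnion]
    constructor
    · rintro ⟨-, hC⟩
      obtain ⟨b, ⟨hbD, hCb⟩, -⟩ := hDdesign C hC
      exact ⟨b, hbD, hCb, hC⟩
    · rintro ⟨b, -, -, hC⟩
      exact ⟨Finset.subset_univ _, hC⟩
  have hch : n.choose (r - 1) = D.card * (r + t - 2).choose (r - 1) := by
    have h := congrArg Finset.card hcover
    rw [Finset.card_powersetCard, Finset.card_univ, Fintype.card_fin,
      Finset.card_biUnion (hdisj (r-1) le_rfl),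
      Finset.sum_congr rfl (fun b hb => by
        rw [Finset.card_powersetCard, hDcard b hb]), Finset.sum_const, smul_eq_mul] at h
    exact h
  refine ⟨part1, ?_, hEcard, ?_⟩
  · -- tree-freeness
    rintro β _ T hT htc ⟨f, hfinj, hfmap⟩
    set S : Finset (Fin n) := Finset.univ.image (fun i : Fin (r-2) => f (Sum.inr i))
      with hSdef
    have hinlS : ∀ a : β, f (Sum.inl a) ∉ S := by
      intro a ha
      simp only [S, Finset.mem_image] at ha
      obtain ⟨i, -, hi⟩ := ha
      exact absurd (hfinj hi) (by simp)
    have hScard : S.card = r - 2 := by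
      rw [Finset.card_image_of_injective _ (fun i j h => by simpa using hfinj h),
        Finset.card_univ, Fintype.card_fin]
    have hCcard : ∀ a : β, (insert (f (Sum.inl a)) S).card = r - 1 := by
      intro a; rw [Finset.card_insert_of_notMem (hinlS a), hScard]; omega
    choose B hBD hBsub using fun a : β => (hDdesign _ (hCcard a)).exists
    have hadjB : ∀ a c : β, T.Adj a c → B a = B c := by
      intro a c hac
      have hedge : ({Sum.inl a, Sum.inl c} : Finset (β ⊕ Fin (r-2)))
          ∪ Finset.univ.image Sum.inr ∈ suspEdges T r := ⟨a, c, hac, rfl⟩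
      obtain ⟨b, hbD, hbsub, -⟩ := (hmemE _).mp (hfmap _ hedge)
      have himg : (({Sum.inl a, Sum.inl c} : Finset (β ⊕ Fin (r-2)))
          ∪ Finset.univ.image Sum.inr).image f
          = {f (Sum.inl a), f (Sum.inl c)} ∪ S := by
        rw [Finset.image_union]
        congr 1
        · simp
        · rw [Finset.image_image]; rfl
      rw [himg] at hbsub
      have h1 : B a = b := aux15_block_eq D hDdesign (hCcard a) (hBD a) hbD (hBsub a)
        (by intro x hx; apply hbsub
            rcases Finset.mem_insert.mp hx with h | h <;> simp [h])
      have h2 : B c = b := aux15_block_eq D hDdesign (hCcard c) (hBD c) hbD (hBsub c)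
        (by intro x hx; apply hbsub
            rcases Finset.mem_insert.mp hx with h | h <;> simp [h])
      rw [h1, h2]
    have hreach : ∀ a c : β, T.Reachable a c → B a = B c := by
      intro a c h
      obtain ⟨p⟩ := h
      induction p with
      | nil => rfl
      | cons h p ih => exact (hadjB _ _ h).trans ih
    obtain ⟨a₀⟩ := hT.isConnected.nonempty
    have hfin : ∀ a : β, f (Sum.inl a) ∈ B a₀ \ S := by
      intro a
      have hBa : B a = B a₀ := hreach a a₀ (hT.isConnected.preconnected a a₀)
      rw [Finset.mem_sdiff]
      exact ⟨hBa ▸ hBsub a (Finset.mem_insert_self _ _), hinlS a⟩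
    have hβfin : Finite β := Finite.of_injective (fun a : β => f (Sum.inl a))
      (fun a c h => by simpa using hfinj h)
    have : Fintype β := Fintype.ofFinite β
    have hle : Fintype.card β ≤ (B a₀ \ S).card := by
      have hsub : Finset.univ.image (fun a : β => f (Sum.inl a)) ⊆ B a₀ \ S := by
        intro x hx
        obtain ⟨a, -, rfl⟩ := Finset.mem_image.mp hx
        exact hfin a
      calc Fintype.card β = (Finset.univ.image (fun a : β => f (Sum.inl a))).card := by
            rw [Finset.card_image_of_injective _ (fun a c h => by simpa using hfinj h),
              Finset.card_univ]
        _ ≤ _ := Finset.card_le_card hsub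
    have hSsub : S ⊆ B a₀ := fun x hx => hBsub a₀ (Finset.mem_insert_of_mem hx)
    have hBS : (B a₀ \ S).card = t := by
      rw [Finset.card_sdiff_of_subset hSsub, hDcard _ (hBD a₀), hScard]; omega
    have : Fintype T.edgeSet := Fintype.ofFinite _
    have hcardβ : T.edgeFinset.card + 1 = Fintype.card β := hT.card_edgeFinset
    rw [Set.ncard_eq_toFinset_card'] at htc
    have : T.edgeFinset.card = t := htc
    omega
  · -- the arithmetic identity
    have hr1 : r - 1 + 1 = r := by omega
    have hkey : (r + t - 2).choose r * r = (r + t - 2).choose (r - 1) * (t - 1) := by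
      have h := Nat.choose_succ_right_eq (r + t - 2) (r - 1)
      rw [hr1] at h
      rw [h]
      congr 1
      omega
    calc r * E.card = D.card * ((r + t - 2).choose r * r) := by rw [hEcard]; ring
      _ = D.card * ((r + t - 2).choose (r - 1) * (t - 1)) := by rw [hkey]
      _ = (t - 1) * (D.card * (r + t - 2).choose (r - 1)) := by ring
      _ = (t - 1) * n.choose (r - 1) := by rw [hch]
end

section
/- Let $T$ be a tree with $t$ edges satisfying the Erdős–Sós bound $\mathrm{ex}(m, T) \leq (t-1)m/2$ for all $m$, and let $r \geq 3$. Then $\mathrm{ex}_r(n, \mathcal{S}^r T) \leq \frac{t-1}{r}\binom{n}{r-1}$ for all $n \geq r$ — i.e., the suspension $\mathcal{S}^r T$ satisfies Kalai's conjectured bound for hypertrees with $t$ hyperedges. -/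
open Finset

/-- if the tree `T` with `t` edges satisfies the Erdős–Sós bound
`ex(m, T) ≤ (t-1)m/2` for all `m`, then `ex_r(n, S^r T) ≤ (t-1) C(n, r-1) / r`
(Kalai's bound for the hypertree `S^r T`). -/
theorem stmt19 {α : Type*} [Fintype α] [DecidableEq α] (T : SimpleGraph α) (t r : ℕ)
    (hT : T.IsTree) (hTe : T.edgeSet.ncard = t) (hr : 3 ≤ r)
    (hES : ∀ m : ℕ, ∀ G : SimpleGraph (Fin m), ¬ ContainsGraph G T →
      (G.edgeSet.ncard : ℝ) ≤ ((t : ℝ) - 1) * (m : ℝ) / 2) :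
    ∀ n : ℕ, r ≤ n → ∀ E : Finset (Finset (Fin n)), (∀ e ∈ E, e.card = r) →
      ¬ HasCopy (↑E : Set (Finset (Fin n))) (suspEdges T r) →
      (E.card : ℝ) ≤ ((t : ℝ) - 1) * (n.choose (r - 1) : ℝ) / (r : ℝ) := by
    classical
  intro n hn E hEcard hno
  set P := (Finset.univ : Finset (Fin n)).powersetCard (r - 2) with hPdef
  -- Step 1: double counting
  have step1 : ∑ S ∈ P, (E.filter fun e => S ⊆ e).card = E.card * r.choose 2 := by
    have h1 : ∀ S : Finset (Fin n), (E.filter fun e => S ⊆ e).card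
        = ∑ e ∈ E, if S ⊆ e then 1 else 0 := fun S => Finset.card_filter _ _
    calc ∑ S ∈ P, (E.filter fun e => S ⊆ e).card
        = ∑ S ∈ P, ∑ e ∈ E, if S ⊆ e then 1 else 0 := Finset.sum_congr rfl (fun S _ => h1 S)
      _ = ∑ e ∈ E, ∑ S ∈ P, if S ⊆ e then 1 else 0 := Finset.sum_comm
      _ = ∑ e ∈ E, (P.filter fun S => S ⊆ e).card :=
          Finset.sum_congr rfl (fun e _ => (Finset.card_filter _ _).symm)
      _ = ∑ e ∈ E, r.choose 2 := by
          refine Finset.sum_congr rfl (fun e he => ?_)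
          have hfe : P.filter (fun S => S ⊆ e) = e.powersetCard (r - 2) := by
            ext S
            simp only [hPdef, Finset.mem_filter, Finset.mem_powersetCard, Finset.subset_univ,
              true_and]
            tauto
          rw [hfe, Finset.card_powersetCard, hEcard e he, Nat.choose_symm (by omega : 2 ≤ r)]
      _ = E.card * r.choose 2 := by rw [Finset.sum_const, smul_eq_mul]
  -- Step 2: per-S bound via the Erdős–Sós hypothesis
  have step2 : ∀ S ∈ P, ((E.filter fun e => S ⊆ e).card : ℝ)
      ≤ ((t : ℝ) - 1) * ((n - r + 2 : ℕ) : ℝ) / 2 := by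
    intro S hSP
    have hS : S.card = r - 2 := (Finset.mem_powersetCard.mp hSP).2
    have hcc : Fintype.card {v : Fin n // v ∉ S} = n - r + 2 := by
      rw [Fintype.card_subtype_compl]
      simp only [Fintype.card_coe, Fintype.card_fin, hS]
      omega
    let ec : {v : Fin n // v ∉ S} ≃ Fin (n - r + 2) := Fintype.equivFinOfCardEq hcc
    let G : SimpleGraph (Fin (n - r + 2)) := (linkGraph (↑E) S).comap ⇑ec.symm
    have hGadj : ∀ x y, G.Adj x y ↔ (ec.symm x ≠ ec.symm y ∧
        S ∪ {((ec.symm x : Fin n)), ((ec.symm y : Fin n))} ∈ (↑E : Set (Finset (Fin n)))) :=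
      fun _ _ => Iff.rfl
    -- no copy of T in G
    have hnc : ¬ ContainsGraph G T := by
      rintro ⟨f, hf, hfa⟩
      apply hno
      have hScard : Fintype.card {x // x ∈ S} = r - 2 := by
        simp [hS]
      let σ : Fin (r - 2) ≃ {x // x ∈ S} := (Fintype.equivFinOfCardEq hScard).symm
      refine ⟨Sum.elim (fun a => ((ec.symm (f a) : Fin n))) (fun i => ((σ i : Fin n))), ?_, ?_⟩
      · intro u v huv
        match u, v with
        | Sum.inl a, Sum.inl b =>
          simp only [Sum.elim_inl] at huv
          exact congrArg Sum.inl (hf (ec.symm.injective (Subtype.coe_injective huv)))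
        | Sum.inl a, Sum.inr i =>
          exfalso
          simp only [Sum.elim_inl, Sum.elim_inr] at huv
          exact (ec.symm (f a)).2 (huv ▸ (σ i).2)
        | Sum.inr i, Sum.inl a =>
          exfalso
          simp only [Sum.elim_inl, Sum.elim_inr] at huv
          exact (ec.symm (f a)).2 (huv ▸ (σ i).2)
        | Sum.inr i, Sum.inr j =>
          simp only [Sum.elim_inr] at huv
          exact congrArg Sum.inr (σ.injective (Subtype.coe_injective huv))
      · rintro e' ⟨a, b, hab, rfl⟩
        have hUS : (Finset.univ.image fun i : Fin (r - 2) => ((σ i : Fin n))) = S := by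
          ext v
          simp only [Finset.mem_image, Finset.mem_univ, true_and]
          constructor
          · rintro ⟨i, rfl⟩; exact (σ i).2
          · intro hv; exact ⟨σ.symm ⟨v, hv⟩, by simp⟩
        rw [Finset.image_union, Finset.image_insert, Finset.image_singleton,
          Finset.image_image]
        simp only [Sum.elim_inl, Function.comp_def, Sum.elim_inr]
        rw [hUS]
        have := hfa a b hab
        rw [hGadj] at this
        rw [Finset.union_comm]
        exact this.2
    -- edge count of G equals the number of hyperedges containing S
    have hncard : G.edgeSet.ncard = (E.filter fun e => S ⊆ e).card := by
      let φ : Sym2 (Fin (n - r + 2)) → Finset (Fin n) :=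
        Sym2.lift ⟨fun x y => S ∪ {((ec.symm x : Fin n)), ((ec.symm y : Fin n))},
          fun x y => by dsimp only; rw [Finset.pair_comm]⟩
      have hco : ∀ x y : Fin (n - r + 2),
          ((ec.symm x : Fin n)) = ((ec.symm y : Fin n)) → x = y :=
        fun x y h => ec.symm.injective (Subtype.coe_injective h)
      have hinj : Set.InjOn φ G.edgeSet := by
        intro q1 hq1 q2 hq2 heq
        revert hq1 hq2 heq
        refine Sym2.inductionOn₂ q1 q2 ?_
        intro x y x' y' hq1 hq2 heq
        rw [SimpleGraph.mem_edgeSet, hGadj] at hq1 hq2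
        simp only [φ, Sym2.lift_mk] at heq
        have hne : ((ec.symm x : Fin n)) ≠ ((ec.symm y : Fin n)) :=
          fun h => hq1.1 (Subtype.coe_injective h)
        have mem1 : ∀ c d v : Fin n, v ∉ S → v ∈ S ∪ {c, d} → v = c ∨ v = d := by
          intro c d v hv hmem
          rcases Finset.mem_union.mp hmem with h | h
          · exact absurd h hv
          · simpa using h
        have hmx : ((ec.symm x : Fin n)) ∈ S ∪ {((ec.symm x' : Fin n)), ((ec.symm y' : Fin n))} := by
          rw [← heq]; simp
        have hmy : ((ec.symm y : Fin n)) ∈ S ∪ {((ec.symm x' : Fin n)), ((ec.symm y' : Fin n))} := by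
          rw [← heq]; simp
        have ha := mem1 _ _ _ (ec.symm x).2 hmx
        have hb := mem1 _ _ _ (ec.symm y).2 hmy
        rcases ha with h1 | h1
        · rcases hb with h2 | h2
          · exact absurd (h1.trans h2.symm) hne
          · rw [hco _ _ h1, hco _ _ h2]
        · rcases hb with h2 | h2
          · rw [hco _ _ h1, hco _ _ h2, Sym2.eq_swap]
          · exact absurd (h1.trans h2.symm) hne
      have himg : φ '' G.edgeSet = ↑(E.filter fun e => S ⊆ e) := by
        apply Set.Subset.antisymm
        · rintro q' ⟨q, hq, rfl⟩
          revert hq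
          refine Sym2.inductionOn q ?_
          intro x y hq
          rw [SimpleGraph.mem_edgeSet, hGadj] at hq
          simp only [φ, Sym2.lift_mk]
          rw [Finset.mem_coe, Finset.mem_filter]
          exact ⟨hq.2, Finset.subset_union_left⟩
        · intro e he
          rw [Finset.mem_coe, Finset.mem_filter] at he
          obtain ⟨heE, hSe⟩ := he
          have hc2 : (e \ S).card = 2 := by
            rw [Finset.card_sdiff_of_subset hSe, hEcard e heE, hS]; omega
          obtain ⟨a, b, hab, hpair⟩ := Finset.card_eq_two.mp hc2
          have haS : a ∉ S := by
            have : a ∈ e \ S := by rw [hpair]; simp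
            exact (Finset.mem_sdiff.mp this).2
          have hbS : b ∉ S := by
            have : b ∈ e \ S := by rw [hpair]; simp
            exact (Finset.mem_sdiff.mp this).2
          have heq2 : S ∪ {a, b} = e := by
            rw [← hpair]; exact Finset.union_sdiff_of_subset hSe
          refine ⟨s(ec ⟨a, haS⟩, ec ⟨b, hbS⟩), ?_, ?_⟩
          · rw [SimpleGraph.mem_edgeSet, hGadj]
            simp only [Equiv.symm_apply_apply]
            refine ⟨fun h => hab (congrArg Subtype.val h), ?_⟩
            show S ∪ {a, b} ∈ (↑E : Set (Finset (Fin n)))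
            rw [heq2]
            exact heE
          · simp only [φ, Sym2.lift_mk, Equiv.symm_apply_apply]
            exact heq2
      rw [← Set.ncard_coe_finset, ← himg, Set.ncard_image_of_injOn hinj]
    have hb := hES (n - r + 2) G hnc
    rw [hncard] at hb
    exact hb
  -- Step 3: combine
  have h3 : (P.card : ℝ) = (n.choose (r - 2) : ℝ) := by
    simp [hPdef, Finset.card_powersetCard]
  have hsum : (E.card : ℝ) * (r.choose 2 : ℝ)
      ≤ (n.choose (r - 2) : ℝ) * (((t : ℝ) - 1) * ((n - r + 2 : ℕ) : ℝ) / 2) := by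
    have h1 : (∑ S ∈ P, ((E.filter fun e => S ⊆ e).card : ℝ))
        = (E.card : ℝ) * (r.choose 2 : ℝ) := by exact_mod_cast step1
    have h2 := Finset.sum_le_card_nsmul P (fun S => ((E.filter fun e => S ⊆ e).card : ℝ)) _ step2
    rw [nsmul_eq_mul, h3] at h2
    linarith [h2, h1.ge, h1.le]
  have hid1 : n.choose (r - 1) * (r - 1) = n.choose (r - 2) * (n - r + 2) := by
    have h := Nat.choose_succ_right_eq n (r - 2)
    have e1 : r - 2 + 1 = r - 1 := by omega
    have e2 : n - (r - 2) = n - r + 2 := by omega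
    rw [e1, e2] at h
    exact h
  have hid2 : 2 * r.choose 2 = r * (r - 1) := by
    rw [Nat.choose_two_right]
    refine Nat.mul_div_cancel' ?_
    rcases Nat.even_or_odd r with h | h
    · exact Dvd.dvd.mul_right h.two_dvd _
    · exact Dvd.dvd.mul_left (Nat.Odd.sub_odd h odd_one).two_dvd _
  have hrc : ((r - 1 : ℕ) : ℝ) = (r : ℝ) - 1 := by
    rw [Nat.cast_sub (by omega : 1 ≤ r), Nat.cast_one]
  have hid1' : (n.choose (r - 1) : ℝ) * ((r : ℝ) - 1)
      = (n.choose (r - 2) : ℝ) * ((n - r + 2 : ℕ) : ℝ) := by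
    rw [← hrc]; exact_mod_cast hid1
  have hid2' : 2 * (r.choose 2 : ℝ) = (r : ℝ) * ((r : ℝ) - 1) := by
    rw [← hrc]; exact_mod_cast hid2
  have hr1 : (0 : ℝ) < (r : ℝ) - 1 := by
    have : (3 : ℝ) ≤ (r : ℝ) := by exact_mod_cast hr
    linarith
  have hrpos : (0 : ℝ) < (r : ℝ) := by linarith
  rw [le_div_iff₀ hrpos]
  refine (mul_le_mul_iff_of_pos_right hr1).mp ?_
  calc (E.card : ℝ) * (r : ℝ) * ((r : ℝ) - 1)
      = (E.card : ℝ) * (2 * (r.choose 2 : ℝ)) := by rw [hid2']; ring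
    _ ≤ 2 * ((n.choose (r - 2) : ℝ) * (((t : ℝ) - 1) * ((n - r + 2 : ℕ) : ℝ) / 2)) := by
        linarith [hsum]
    _ = ((t : ℝ) - 1) * ((n.choose (r - 2) : ℝ) * ((n - r + 2 : ℕ) : ℝ)) := by ring
    _ = ((t : ℝ) - 1) * ((n.choose (r - 1) : ℝ) * ((r : ℝ) - 1)) := by rw [hid1']
    _ = ((t : ℝ) - 1) * (n.choose (r - 1) : ℝ) * ((r : ℝ) - 1) := by ring
end
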